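/- arXiv:2506.03343 — 11 statements merged into one kernel-verified Lean document; each statement's English description precedes it below -/
import Mathlib

section
/- Let M be a monoid presented by generators S (a finite set) and homogeneous relations R (each relation equates two words of equal length over S), such that for each generator s ∈ S, at most one word appearing in the relations of R begins with s. Then M is left-cancellative: for all a, b, c ∈ M, if a·b = a·c then b = c. -/
/-!
Write `u ≡ v` when `v` arises from `u` by finitely many replacements of a factor by the other
side of a relation. Homogeneity makes `≡` length-preserving, so one can argue by induction on
length, and it suffices to cancel one letter. The invariant is: if `a u ≡ b v`, then either
`a = b` and `u ≡ v`, or `u ≡ r q` and `v ≡ r' q` for relation words `a r`, `b r'` and a common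
tail `q`. A rewriting step that replaces a relation word `b r''` at the front of `b v = b r'' q₀`
forces `r'' = r'` by uniqueness, and cancelling `r'` in `r' q₀ ≡ r' q` (induction hypothesis,
as `v` is shorter than `b v`) restores the invariant with tail `q₀`. For `a = b`, uniqueness
gives `r = r'`, whence `u ≡ v`.
-/

open Relation

namespace WordRewriting

variable {α : Type*} (R : List α → List α → Prop)

def RewriteStep (x y : List α) : Prop :=
  ∃ p w w' q, SymmGen R w w' ∧ x = p ++ w ++ q ∧ y = p ++ w' ++ q

abbrev Rewrites : List α → List α → Prop := ReflTransGen (RewriteStep R)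

def IsRelWord (w : List α) : Prop := ∃ u, SymmGen R w u

def Compatible (a : α) (u : List α) (b : α) (v : List α) : Prop :=
  (a = b ∧ Rewrites R u v) ∨
    ∃ r r' q, IsRelWord R (a :: r) ∧ IsRelWord R (b :: r') ∧
      Rewrites R u (r ++ q) ∧ Rewrites R v (r' ++ q)

def CancelsBelow (m : ℕ) : Prop :=
  ∀ s u v, u.length < m → Rewrites R (s :: u) (s :: v) → Rewrites R u v

variable {R}

instance : Std.Symm (RewriteStep R) where
  symm _ _ := fun ⟨p, w, w', q, hw, hx, hy⟩ => ⟨p, w', w, q, hw.symm, hy, hx⟩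

theorem Rewrites.symm {x y : List α} (h : Rewrites R x y) : Rewrites R y x :=
  _root_.symm h

theorem Rewrites.append_left (p : List α) {x y : List α} (h : Rewrites R x y) :
    Rewrites R (p ++ x) (p ++ y) :=
  ReflTransGen.lift (p ++ ·)
    (fun _ _ ⟨u, w, w', q, hw, hx, hy⟩ => ⟨p ++ u, w, w', q, hw, by simp [hx], by simp [hy]⟩)
    _ _ h

theorem Rewrites.append_right (q : List α) {x y : List α} (h : Rewrites R x y) :
    Rewrites R (x ++ q) (y ++ q) :=
  ReflTransGen.lift (· ++ q)
    (fun _ _ ⟨p, w, w', u, hw, hx, hy⟩ => ⟨p, w, w', u ++ q, hw, by simp [hx], by simp [hy]⟩)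
    _ _ h

theorem Rewrites.append {x x' y y' : List α} (hx : Rewrites R x x') (hy : Rewrites R y y') :
    Rewrites R (x ++ y) (x' ++ y') :=
  (hx.append_right y).trans (hy.append_left x')

theorem CancelsBelow.append {m : ℕ} (h : CancelsBelow R m) :
    ∀ {p u v : List α}, (p ++ u).length ≤ m → Rewrites R (p ++ u) (p ++ v) → Rewrites R u v
  | [], _, _, _, huv => huv
  | s :: p, _, _, hlen, huv => by
    simp only [List.cons_append, List.length_cons] at hlen huv
    exact h.append (Nat.le_of_succ_le hlen) (h s _ _ hlen huv)

section Homogeneous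

variable (hhom : ∀ w w', R w w' → w.length = w'.length)
include hhom

theorem length_eq_of_symmGen {w w' : List α} (h : SymmGen R w w') : w.length = w'.length :=
  h.elim (hhom w w') (fun h => (hhom w' w h).symm)

theorem RewriteStep.length_eq {x y : List α} (h : RewriteStep R x y) : x.length = y.length := by
  obtain ⟨p, w, w', q, hw, rfl, rfl⟩ := h
  simp [length_eq_of_symmGen hhom hw]

theorem Rewrites.length_eq {x y : List α} (h : Rewrites R x y) : x.length = y.length := by
  induction h with
  | refl => rfl
  | tail _ hstep ih => exact ih.trans (hstep.length_eq hhom)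

theorem RewriteStep.cons_cons {b c : α} {u v : List α} (h : RewriteStep R (b :: u) (c :: v)) :
    (b = c ∧ Rewrites R u v) ∨
      ∃ r r' q, IsRelWord R (b :: r) ∧ IsRelWord R (c :: r') ∧ u = r ++ q ∧ v = r' ++ q := by
  obtain ⟨p, w, w', q, hw, hx, hy⟩ := h
  have hlen := length_eq_of_symmGen hhom hw
  rcases p with _ | ⟨p₀, p⟩
  · rcases w with _ | ⟨b', r⟩ <;> rcases w' with _ | ⟨c', r'⟩
    · simp only [List.nil_append] at hx hy
      rw [← hy] at hx
      obtain ⟨rfl, rfl⟩ := List.cons_eq_cons.mp hx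
      exact .inl ⟨rfl, .refl⟩
    · simp at hlen
    · simp at hlen
    · simp only [List.nil_append, List.cons_append, List.cons_eq_cons] at hx hy
      obtain ⟨rfl, rfl⟩ := hx
      obtain ⟨rfl, rfl⟩ := hy
      exact .inr ⟨r, r', q, ⟨_, hw⟩, ⟨_, hw.symm⟩, rfl, rfl⟩
  · simp only [List.cons_append, List.cons_eq_cons] at hx hy
    obtain ⟨rfl, rfl⟩ := hx
    obtain ⟨rfl, rfl⟩ := hy
    exact .inl ⟨rfl, .single ⟨p, w, w', q, hw, rfl, rfl⟩⟩

variable (hstart : ∀ s r r', IsRelWord R (s :: r) → IsRelWord R (s :: r') → r = r')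
include hstart

omit hhom in
theorem Compatible.rewrites_tail {s : α} {u v : List α} (h : Compatible R s u s v) :
    Rewrites R u v := by
  rcases h with ⟨-, huv⟩ | ⟨r, r', q, hr, hr', hu, hv⟩
  · exact huv
  · obtain rfl := hstart s r r' hr hr'
    exact hu.trans hv.symm

theorem Compatible.of_rewriteStep {a b c : α} {u v w : List α} (hc : CancelsBelow R v.length)
    (h : Compatible R a u b v) (hs : RewriteStep R (b :: v) (c :: w)) : Compatible R a u c w := by
  rcases hs.cons_cons hhom with ⟨rfl, hvw⟩ | ⟨r, r', q, hr, hr', rfl, rfl⟩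
  · rcases h with ⟨rfl, huv⟩ | ⟨ru, rv, q, hru, hrv, hu, hv⟩
    · exact .inl ⟨rfl, huv.trans hvw⟩
    · exact .inr ⟨ru, rv, q, hru, hrv, hu, hvw.symm.trans hv⟩
  · rcases h with ⟨rfl, huv⟩ | ⟨ru, rv, q', hru, hrv, hu, hv⟩
    · exact .inr ⟨r, r', q, hr, hr', huv, .refl⟩
    · obtain rfl := hstart b rv r hrv hr
      have hq : Rewrites R q q' := hc.append le_rfl hv
      exact .inr ⟨ru, r', q, hru, hr', hu.trans (hq.symm.append_left ru), .refl⟩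

theorem compatible_of_rewrites {a : α} {u y : List α} (hc : CancelsBelow R u.length)
    (h : Rewrites R (a :: u) y) : ∀ {b v}, y = b :: v → Compatible R a u b v := by
  induction h with
  | refl => rintro b v ⟨⟩; exact .inl ⟨rfl, .refl⟩
  | @tail y z hy hyz ih =>
    rintro c w rfl
    obtain ⟨b, v, rfl⟩ : ∃ b v, y = b :: v :=
      List.exists_cons_of_length_pos (by rw [hyz.length_eq hhom]; simp)
    have hv : v.length = u.length := by simpa using (Rewrites.length_eq hhom hy).symm
    exact (ih rfl).of_rewriteStep hhom hstart (hv ▸ hc) hyz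

theorem cancelsBelow : ∀ m, CancelsBelow R m
  | 0 => fun _ _ _ hu => absurd hu (Nat.not_lt_zero _)
  | m + 1 => fun s u v hu huv => by
    rcases Nat.lt_succ_iff_lt_or_eq.mp hu with hu | rfl
    · exact cancelsBelow m s u v hu huv
    · exact (compatible_of_rewrites hhom hstart (cancelsBelow _) huv rfl).rewrites_tail hstart

theorem Rewrites.of_append_left {p u v : List α} (h : Rewrites R (p ++ u) (p ++ v)) :
    Rewrites R u v :=
  (cancelsBelow hhom hstart _).append le_rfl h

end Homogeneous

end WordRewriting

namespace FreeMonoid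

open WordRewriting

variable {α : Type*} {R : FreeMonoid α → FreeMonoid α → Prop}

theorem conGen_iff_rewrites {x y : FreeMonoid α} :
    conGen R x y ↔ Rewrites (fun l l' => R (ofList l) (ofList l')) x.toList y.toList := by
  constructor
  · intro h
    induction h with
    | of x y hxy => exact .single ⟨[], x.toList, y.toList, [], .of_rel hxy, by simp, by simp⟩
    | refl => exact .refl
    | symm _ ih => exact ih.symm
    | trans _ _ ih₁ ih₂ => exact ih₁.trans ih₂
    | mul _ _ ih₁ ih₂ => exact ih₁.append ih₂
  · suffices ∀ {l l'}, Rewrites _ l l' → conGen R (ofList l) (ofList l') from this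
    intro l l' h
    induction h with
    | refl => exact (conGen R).refl _
    | tail _ hstep ih =>
      obtain ⟨p, w, w', q, hw, rfl, rfl⟩ := hstep
      refine (conGen R).trans ih ?_
      simp only [ofList_append]
      refine (conGen R).mul ((conGen R).mul ((conGen R).refl _) ?_) ((conGen R).refl _)
      exact hw.elim (ConGen.Rel.of _ _) (fun h => (ConGen.Rel.of _ _ h).symm)

theorem conGen_cancel_left
    (hhom : ∀ w w', R w w' → w.toList.length = w'.toList.length)
    (hstart : ∀ (s : α) (w₁ w₂ : FreeMonoid α),
      (∃ u, R w₁ u ∨ R u w₁) → (∃ u, R w₂ u ∨ R u w₂) →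
      w₁.toList.head? = some s → w₂.toList.head? = some s → w₁ = w₂)
    {x u v : FreeMonoid α} (h : conGen R (x * u) (x * v)) : conGen R u v := by
  have hstart' : ∀ s r r', IsRelWord (fun l l' => R (ofList l) (ofList l')) (s :: r) →
      IsRelWord (fun l l' => R (ofList l) (ofList l')) (s :: r') → r = r' :=
    fun s r r' ⟨t, ht⟩ ⟨t', ht'⟩ =>
      List.cons_injective (hstart s _ _ ⟨ofList t, ht⟩ ⟨ofList t', ht'⟩ rfl rfl)
  rw [conGen_iff_rewrites, toList_mul, toList_mul] at h
  exact conGen_iff_rewrites.mpr (h.of_append_left (fun _ _ => hhom _ _) hstart')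

end FreeMonoid

theorem stmt0_general {α : Type*}
    (R : FreeMonoid α → FreeMonoid α → Prop)
    (hhom : ∀ w w', R w w' → w.toList.length = w'.toList.length)
    (hstart : ∀ (s : α) (w₁ w₂ : FreeMonoid α),
      (∃ u, R w₁ u ∨ R u w₁) → (∃ u, R w₂ u ∨ R u w₂) →
      w₁.toList.head? = some s → w₂.toList.head? = some s → w₁ = w₂)
    (c : Con (FreeMonoid α)) (hc : c = conGen R) :
    ∀ a b d : c.Quotient, a * b = a * d → b = d := by
  subst hc
  intro a b d
  induction a using Con.induction_on with | H x => ?_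
  induction b using Con.induction_on with | H u => ?_
  induction d using Con.induction_on with | H v => ?_
  rw [← Con.coe_mul, ← Con.coe_mul, Con.eq, Con.eq]
  exact FreeMonoid.conGen_cancel_left hhom hstart

/-- A homogeneously presented monoid in which, for each generator `s`, at most one word
appearing in the relations begins with `s`, is left-cancellative. -/
theorem stmt0 {α : Type*} [Fintype α]
    (R : FreeMonoid α → FreeMonoid α → Prop)
    (hhom : ∀ w w', R w w' → w.toList.length = w'.toList.length)
    (hstart : ∀ (s : α) (w₁ w₂ : FreeMonoid α),
      (∃ u, R w₁ u ∨ R u w₁) → (∃ u, R w₂ u ∨ R u w₂) →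
      w₁.toList.head? = some s → w₂.toList.head? = some s → w₁ = w₂)
    (c : Con (FreeMonoid α)) (hc : c = conGen R) :
    ∀ a b d : c.Quotient, a * b = a * d → b = d :=
  stmt0_general R hhom hstart c hc
end

section
/- Let L be a finite graded lattice with no nontrivial automorphisms, and let 𝓛 be a finite-type ℕ-graded upho lattice such that for every x ∈ 𝓛, letting y_1,…,y_k be the covers of x, the interval [x, y_1 ∨ ⋯ ∨ y_k] is isomorphic to L. Then 𝓛 has no nontrivial automorphisms. -/
/-!
An automorphism `f` fixing `x` permutes the covers of `x`, hence fixes their join `m`, and so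
restricts to an automorphism of the core `[x, m]`. The core is isomorphic to the rigid lattice `L`,
so this restriction is the identity; in particular `f` fixes every cover of `x`. Since every element
is reached from `⊥` by a chain of covers, induction on the rank shows that `f` fixes everything.
-/

open Set

theorem covBy_induction {P : Type*} [PartialOrder P] [OrderBot P] (ρ : P → ℕ)
    (hρ : ∀ x y : P, x ⋖ y → ρ x < ρ y) (hdown : ∀ x : P, x ≠ ⊥ → ∃ y, y ⋖ x)
    {p : P → Prop} (bot : p ⊥) (cov : ∀ x y : P, x ⋖ y → p x → p y) (x : P) : p x := by
  by_cases hx : x = ⊥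
  · exact hx ▸ bot
  · obtain ⟨y, hy⟩ := hdown x hx
    exact cov y x hy (covBy_induction ρ hρ hdown bot cov y)
termination_by ρ x
decreasing_by exact hρ y x hy

namespace OrderIso

theorem apply_eq_self_of_rigid {α β : Type*} [LE α] [LE β] (e : α ≃o β)
    (hβ : ∀ g : β ≃o β, ∀ y, g y = y) (g : α ≃o α) (x : α) : g x = x :=
  e.injective <| by simpa using hβ (e.symm.trans (g.trans e)) (e x)

variable {P : Type*}

theorem image_setOf_covBy [Preorder P] (f : P ≃o P) (x : P) :
    f '' {y | x ⋖ y} = {y | f x ⋖ y} := by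
  ext z
  simp only [f.image_eq_preimage_symm, mem_preimage, mem_ofPred_eq]
  rw [← apply_covBy_apply_iff f, apply_symm_apply]

theorem apply_eq_of_isLUB_setOf_covBy [PartialOrder P] {f : P ≃o P} {x m : P} (hx : f x = x)
    (hm : IsLUB {y | x ⋖ y} m) : f m = m := by
  have hfm := f.isLUB_image'.2 hm
  rw [image_setOf_covBy, hx] at hfm
  exact hfm.unique hm

theorem apply_eq_self_of_mem_Icc [Lattice P] (f : P ≃o P) {a b : P} (ha : f a = a)
    (hb : f b = b) {L : Type*} [LE L] (φ : Icc a b ≃o L) (hL : ∀ g : L ≃o L, ∀ z, g z = z)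
    {z : P} (hz : z ∈ Icc a b) : f z = z := by
  let g : Icc a b ≃o Icc a b := (f.Icc a b).trans (setCongr _ _ (by rw [ha, hb]))
  exact congrArg Subtype.val (φ.apply_eq_self_of_rigid hL g ⟨z, hz⟩)

end OrderIso

theorem stmt6_general {L : Type*} [Lattice L]
    (hLrigid : ∀ f : L ≃o L, ∀ x, f x = x)
    {P : Type*} [Lattice P] [OrderBot P]
    (ρ : P → ℕ) (hρcov : ∀ x y : P, x ⋖ y → ρ y = ρ x + 1)
    (hdown : ∀ x : P, x ≠ ⊥ → ∃ y, y ⋖ x)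
    (hcore : ∀ x : P, ∃ m : P, IsLUB {y | x ⋖ y} m ∧ Nonempty (Set.Icc x m ≃o L)) :
    ∀ f : P ≃o P, ∀ x, f x = x := by
  intro f
  refine covBy_induction ρ (fun x y h => by rw [hρcov x y h]; omega) hdown f.map_bot ?_
  intro x y hxy hx
  obtain ⟨m, hm, ⟨φ⟩⟩ := hcore x
  exact f.apply_eq_self_of_mem_Icc hx (f.apply_eq_of_isLUB_setOf_covBy hx hm) φ hLrigid
    ⟨hxy.le, hm.1 hxy⟩

/-- If a finite graded lattice `L` has no nontrivial automorphisms, then any finite-type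
ℕ-graded upho lattice `𝓛` whose core (the interval from any element to the join of its
covers) is isomorphic to `L` has no nontrivial automorphisms. -/
theorem stmt6 {L : Type*} [Lattice L] [BoundedOrder L] [Fintype L]
    (gL : L → ℕ) (hgL0 : gL ⊥ = 0) (hgLcov : ∀ x y : L, x ⋖ y → gL y = gL x + 1)
    (hLrigid : ∀ f : L ≃o L, ∀ x, f x = x)
    {P : Type*} [Lattice P] [OrderBot P]
    (ρ : P → ℕ) (hρ0 : ρ ⊥ = 0) (hρcov : ∀ x y : P, x ⋖ y → ρ y = ρ x + 1)
    (hdown : ∀ x : P, x ≠ ⊥ → ∃ y, y ⋖ x)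
    (hfin : ∀ i : ℕ, {x : P | ρ x = i}.Finite)
    (hupho : ∀ p : P, Nonempty ({q : P // p ≤ q} ≃o P))
    (hcore : ∀ x : P, ∃ m : P, IsLUB {y | x ⋖ y} m ∧ Nonempty (Set.Icc x m ≃o L)) :
    ∀ f : P ≃o P, ∀ x, f x = x :=
  stmt6_general hLrigid ρ hρcov hdown hcore
end

section
/- Let 𝓟 be a finite-type ℕ-graded upho poset with no nontrivial automorphisms. Then any system of isomorphisms φ_p : V_p → 𝓟 (one for each p ∈ 𝓟) is automatically compatible, i.e., φ_q = φ_{φ_p(q)} ∘ (φ_p restricted to V_q) for all p ≤ q ∈ 𝓟. -/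
/-!
The maps `φ_{φ_p(q)} ∘ φ_p|_{V_q}` and `φ_q` are two isomorphisms `V_q ≃o 𝓟`, so
`φ_{φ_p(q)} ∘ φ_p|_{V_q} ∘ φ_q⁻¹` is an automorphism of `𝓟`; by rigidity it is the identity.
-/

namespace OrderIso

variable {P Q : Type*}

def restrictIci [Preorder P] [Preorder Q] {p q : P} (f : {x : P // p ≤ x} ≃o Q) (hpq : p ≤ q) :
    {x : P // q ≤ x} ≃o {y : Q // f ⟨q, hpq⟩ ≤ y} where
  toFun x := ⟨f ⟨x, hpq.trans x.2⟩, f.le_iff_le.mpr x.2⟩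
  invFun y := ⟨(f.symm y).1, (f.le_symm_apply.mpr y.2 : (⟨q, hpq⟩ : {x : P // p ≤ x}) ≤ _)⟩
  left_inv x := by simp
  right_inv y := by simp
  map_rel_iff' := f.le_iff_le

theorem apply_eq_apply_of_rigid [LE P] [LE Q] (hrigid : ∀ f : P ≃o P, ∀ x, f x = x)
    (e₁ e₂ : Q ≃o P) (x : Q) : e₁ x = e₂ x := by
  simpa using hrigid (e₂.symm.trans e₁) (e₂ x)

end OrderIso

theorem stmt7_general {P : Type*} [PartialOrder P]
    (hrigid : ∀ f : P ≃o P, ∀ x, f x = x)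
    (φ : ∀ p : P, {q : P // p ≤ q} ≃o P) :
    ∀ (p q : P) (hpq : p ≤ q) (r : {x : P // q ≤ x}),
      φ q r = φ ((φ p) ⟨q, hpq⟩)
        ⟨(φ p) ⟨r.1, hpq.trans r.2⟩,
          (φ p).le_iff_le.mpr (Subtype.mk_le_mk.mpr r.2)⟩ := by
  intro p q hpq r
  exact OrderIso.apply_eq_apply_of_rigid hrigid (φ q) (((φ p).restrictIci hpq).trans (φ _)) r

/-- In a finite-type ℕ-graded upho poset with no nontrivial automorphisms, any system
of isomorphisms `φ_p : V_p → P` is automatically compatible. -/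
theorem stmt7 {P : Type*} [PartialOrder P] [OrderBot P]
    (ρ : P → ℕ) (hρ0 : ρ ⊥ = 0) (hcov : ∀ x y : P, x ⋖ y → ρ y = ρ x + 1)
    (hfin : ∀ i : ℕ, {x : P | ρ x = i}.Finite)
    (hrigid : ∀ f : P ≃o P, ∀ x, f x = x)
    (φ : ∀ p : P, {q : P // p ≤ q} ≃o P) :
    ∀ (p q : P) (hpq : p ≤ q) (r : {x : P // q ≤ x}),
      φ q r = φ ((φ p) ⟨q, hpq⟩)
        ⟨(φ p) ⟨r.1, hpq.trans r.2⟩,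
          (φ p).le_iff_le.mpr (Subtype.mk_le_mk.mpr r.2)⟩ :=
  stmt7_general hrigid φ
end

section
/- Fix n ≥ 2 and a function f : [n] → [n]. In the monoid M(f) = ⟨s_1,…,s_n ∣ s_1 s_{f(1)} = s_2 s_{f(2)} = ⋯ = s_n s_{f(n)}⟩, M(f) is left-cancellative. -/
/-!
Words over `α` are compared modulo the rewriting `x (i f(i)) y ↔ x (j f(j)) y`, which presents
`M(f)`. To cancel a first letter, follow a rewriting chain from `i :: u` to `j :: v`: at every stage
either the first letters agree and the tails are equivalent, or the tails are equivalent to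
`f i :: w` and `f j :: w` for a common word `w`. A rewrite touching the first letter switches
between the two alternatives, and switching back needs cancellation of a first letter in front of
`w`, which is shorter than `u`; so cancellation follows by strong induction on the length.
-/

namespace PairPresentation

open Relation

variable {α : Type*} (f : α → α)

def PairStep (u v : List α) : Prop :=
  ∃ (x y : List α) (i j : α), u = x ++ i :: f i :: y ∧ v = x ++ j :: f j :: y

abbrev PairEquiv : List α → List α → Prop := ReflTransGen (PairStep f)

instance : Std.Symm (PairStep f) where
  symm _ _ := fun ⟨x, y, i, j, hu, hv⟩ => ⟨x, y, j, i, hv, hu⟩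

variable {f}

theorem PairStep.cons_cases {i : α} {u w : List α} (h : PairStep f (i :: u) w) :
    (∃ j y, u = f i :: y ∧ w = j :: f j :: y) ∨ ∃ u', PairStep f u u' ∧ w = i :: u' := by
  obtain ⟨_ | ⟨a, x⟩, y, i', j, hu, rfl⟩ := h
  · obtain ⟨rfl, rfl⟩ := List.cons.inj hu
    exact .inl ⟨j, y, rfl, rfl⟩
  · obtain ⟨rfl, rfl⟩ := List.cons.inj hu
    exact .inr ⟨_, ⟨x, y, i', j, rfl, rfl⟩, rfl⟩

theorem PairStep.length_eq {u v : List α} (h : PairStep f u v) : u.length = v.length := by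
  obtain ⟨x, y, i, j, rfl, rfl⟩ := h
  simp

namespace PairEquiv

theorem append_left {u v : List α} (x : List α) (h : PairEquiv f u v) :
    PairEquiv f (x ++ u) (x ++ v) :=
  h.lift (x ++ ·) fun _ _ ⟨x', y, i, j, hu, hv⟩ => ⟨x ++ x', y, i, j, by simp [hu], by simp [hv]⟩

theorem append_right {u v : List α} (y : List α) (h : PairEquiv f u v) :
    PairEquiv f (u ++ y) (v ++ y) :=
  h.lift (· ++ y) fun _ _ ⟨x, y', i, j, hu, hv⟩ => ⟨x, y' ++ y, i, j, by simp [hu], by simp [hv]⟩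

theorem cons {u v : List α} (a : α) (h : PairEquiv f u v) : PairEquiv f (a :: u) (a :: v) :=
  h.append_left [a]

theorem cons_cases {m : ℕ}
    (hcancel : ∀ (a : α) (u v : List α), u.length < m → PairEquiv f (a :: u) (a :: v) →
      PairEquiv f u v)
    {i j : α} {u v : List α} (h : PairEquiv f (i :: u) (j :: v)) (hu : u.length = m) :
    (i = j ∧ PairEquiv f u v) ∨ ∃ w, PairEquiv f u (f i :: w) ∧ PairEquiv f v (f j :: w) := by
  generalize hiu : i :: u = a at h
  induction h using ReflTransGen.head_induction_on generalizing i u with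
  | refl =>
    obtain ⟨rfl, rfl⟩ := List.cons.inj hiu
    exact .inl ⟨rfl, .refl⟩
  | head hstep _ ih =>
    subst hiu
    rcases hstep.cons_cases with ⟨i', y, rfl, rfl⟩ | ⟨u', hstep', rfl⟩
    · rcases ih (by simpa using hu) rfl with ⟨rfl, hv⟩ | ⟨w, hyw, hv⟩
      · exact .inr ⟨y, .refl, symm hv⟩
      · have hy : y.length < m := by simp at hu; omega
        exact .inr ⟨w, (hcancel _ _ _ hy hyw).cons _, hv⟩
    · rcases ih (hstep'.length_eq ▸ hu) rfl with ⟨rfl, hv⟩ | ⟨w, hw, hv⟩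
      · exact .inl ⟨rfl, .head hstep' hv⟩
      · exact .inr ⟨w, .head hstep' hw, hv⟩

theorem of_cons {a : α} {u v : List α} (h : PairEquiv f (a :: u) (a :: v)) : PairEquiv f u v := by
  induction hm : u.length using Nat.strong_induction_on generalizing a u v with
  | _ m ih =>
    have hcancel (b : α) (u' v' : List α) (hlt : u'.length < m) :
        PairEquiv f (b :: u') (b :: v') → PairEquiv f u' v' :=
      fun h' => ih _ hlt h' rfl
    rcases cons_cases hcancel h hm with ⟨-, huv⟩ | ⟨w, hu, hv⟩
    exacts [huv, hu.trans (symm hv)]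

theorem of_append_left {x u v : List α} (h : PairEquiv f (x ++ u) (x ++ v)) : PairEquiv f u v := by
  induction x with
  | nil => exact h
  | cons a x ih => exact ih (of_cons h)

end PairEquiv

variable (f) in
def pairCon : Con (FreeMonoid α) where
  r a b := PairEquiv f a.toList b.toList
  iseqv := ⟨fun _ => .refl, symm, .trans⟩
  mul' {a b c d} hab hcd := by
    simp only [FreeMonoid.toList_mul]
    exact (hab.append_right _).trans (hcd.append_left _)

theorem pairCon_apply {a b : FreeMonoid α} : pairCon f a b ↔ PairEquiv f a.toList b.toList :=
  Iff.rfl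

theorem conGen_eq_pairCon :
    (conGen fun u v => ∃ i j : α,
      u = FreeMonoid.of i * FreeMonoid.of (f i) ∧ v = FreeMonoid.of j * FreeMonoid.of (f j)) =
      pairCon f := by
  refine le_antisymm (Con.conGen_le.mpr fun _ _ ⟨i, j, hu, hv⟩ => ?_) fun u v h => ?_
  · subst hu hv
    exact .single ⟨[], [], i, j, rfl, rfl⟩
  · rw [pairCon_apply] at h
    rw [← FreeMonoid.ofList_toList u, ← FreeMonoid.ofList_toList v]
    generalize u.toList = x, v.toList = y at h
    induction h with
    | refl => exact Con.refl _ _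
    | tail _ hstep ih =>
      obtain ⟨x, y, i, j, rfl, rfl⟩ := hstep
      refine Con.trans _ ih ?_
      simp only [FreeMonoid.ofList_append, FreeMonoid.ofList_cons, ← mul_assoc (FreeMonoid.of _)]
      exact Con.mul _ (Con.refl _ _) (Con.mul _ (Con.le_conGen _ _ ⟨i, j, rfl, rfl⟩) (Con.refl _ _))

instance : IsLeftCancelMul (pairCon f).Quotient where
  mul_left_cancel a b d := by
    induction a using Con.induction_on
    induction b using Con.induction_on
    induction d using Con.induction_on
    simp only [← Con.coe_mul, Con.eq, pairCon_apply, FreeMonoid.toList_mul]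
    exact PairEquiv.of_append_left

end PairPresentation

open PairPresentation in
theorem stmt8_general (n : ℕ) (f : Fin n → Fin n)
    (c : Con (FreeMonoid (Fin n)))
    (hc : c = conGen fun u v => ∃ i j : Fin n,
      u = FreeMonoid.of i * FreeMonoid.of (f i) ∧
      v = FreeMonoid.of j * FreeMonoid.of (f j)) :
    ∀ a b d : c.Quotient, a * b = a * d → b = d := by
  subst hc
  rw [conGen_eq_pairCon]
  exact fun _ _ _ => mul_left_cancel

/-- The monoid `M(f) = ⟨s_1,…,s_n ∣ s_1 s_{f(1)} = ⋯ = s_n s_{f(n)}⟩` is left-cancellative. -/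
theorem stmt8 (n : ℕ) (hn : 2 ≤ n) (f : Fin n → Fin n)
    (c : Con (FreeMonoid (Fin n)))
    (hc : c = conGen fun u v => ∃ i j : Fin n,
      u = FreeMonoid.of i * FreeMonoid.of (f i) ∧
      v = FreeMonoid.of j * FreeMonoid.of (f j)) :
    ∀ a b d : c.Quotient, a * b = a * d → b = d :=
  stmt8_general n f c hc
end

section
/- Fix n ≥ 2 and a function f : [n] → [n], and let M(f) = ⟨s_1,…,s_n ∣ s_1 s_{f(1)} = ⋯ = s_n s_{f(n)}⟩. Then for any two words v = s_{i_1}⋯s_{i_k} and w = s_{j_1}⋯s_{j_k} of the same length k over the generators, the following equality holds in M(f): s_{i_1}⋯s_{i_k} · s_{f(i_k)} s_{f³(i_{k−1})} ⋯ s_{f^{2k−1}(i_1)} = s_{j_1}⋯s_{j_k} · s_{f(j_k)} s_{f³(j_{k−1})} ⋯ s_{f^{2k−1}(j_1)}. In particular, any two elements of M(f) have a common right multiple. -/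
/-!
Write `⟨a⟩_m` (`orbitWord f a m`) for the word `a f(a) f²(a) ⋯ f^{m-1}(a)`. Since `⟨a⟩_{2k+2} = s_a s_{f(a)} · ⟨f²(a)⟩_{2k}`,
the defining relations show by induction that `⟨a⟩_{2k}` does not depend on `a` in `M(f)`.
By induction on `v`, the word `v · s_{f(i_k)} ⋯ s_{f^{2k-1}(i_1)}` is congruent to
`s_{i_1} ⟨f(i_1)⟩_{2k-2} s_{f^{2k-1}(i_1)} = ⟨i_1⟩_{2k}`, hence equal to `⟨a⟩_{2k}` for every `a`.
For common right multiples of `x` and `y`, apply this to the words `xy` and `yx`.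
-/

open FreeMonoid

namespace FreeMonoid

variable {α : Type*} (f : α → α)

def orbitWord (a : α) (m : ℕ) : List α :=
  (List.range m).map fun t => f^[t] a

def orbitTail (v : List α) : List α :=
  v.reverse.zipIdx.map fun p => f^[2 * p.2 + 1] p.1

theorem orbitWord_succ (a : α) (m : ℕ) : orbitWord f a (m + 1) = a :: orbitWord f (f a) m := by
  simp [orbitWord, List.range_succ_eq_map, Function.comp_def, Function.iterate_succ_apply]

theorem orbitWord_succ' (a : α) (m : ℕ) :
    orbitWord f a (m + 1) = orbitWord f a m ++ [f^[m] a] := by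
  simp [orbitWord, List.range_succ]

theorem cons_append_orbitTail_cons (i : α) (v : List α) :
    i :: v ++ orbitTail f (i :: v) = i :: (v ++ orbitTail f v ++ [f^[2 * v.length + 1] i]) := by
  simp [orbitTail, List.zipIdx_append]

theorem orbitWord_two_mul_add_two (a : α) (k : ℕ) :
    ofList (orbitWord f a (2 * k + 2)) = of a * of (f a) * ofList (orbitWord f (f (f a)) (2 * k)) := by
  rw [orbitWord_succ, orbitWord_succ]
  rfl

variable {f} {c : Con (FreeMonoid α)} (hrel : ∀ i j, c (of i * of (f i)) (of j * of (f j)))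
include hrel

theorem orbitWord_two_mul_rel (k : ℕ) (a b : α) :
    c (ofList (orbitWord f a (2 * k))) (ofList (orbitWord f b (2 * k))) := by
  induction k generalizing a b with
  | zero => exact c.refl _
  | succ k ih =>
    rw [Nat.mul_succ, orbitWord_two_mul_add_two, orbitWord_two_mul_add_two]
    exact c.mul (hrel a b) (ih _ _)

theorem append_orbitTail_rel_orbitWord (v : List α) (a : α) :
    c (ofList (v ++ orbitTail f v)) (ofList (orbitWord f a (2 * v.length))) := by
  induction v generalizing a with
  | nil => exact c.refl _
  | cons i v ih =>
    have hsplit : orbitWord f i (2 * (i :: v).length) =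
        i :: (orbitWord f (f i) (2 * v.length) ++ [f^[2 * v.length + 1] i]) := by
      rw [List.length_cons, Nat.mul_succ, orbitWord_succ', orbitWord_succ,
        Function.iterate_succ_apply, List.cons_append]
    refine c.trans ?_ (orbitWord_two_mul_rel hrel _ i a)
    rw [cons_append_orbitTail_cons, hsplit, ofList_cons, ofList_cons, ofList_append,
      ofList_append]
    exact c.mul (c.refl _) (c.mul (ih (f i)) (c.refl _))

theorem mk'_append_orbitTail_eq {v w : List α} (h : v.length = w.length) :
    c.mk' (ofList (v ++ orbitTail f v)) = c.mk' (ofList (w ++ orbitTail f w)) := by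
  cases v with
  | nil => rw [List.length_eq_zero_iff.mp h.symm]
  | cons a _ =>
    refine c.eq.mpr (c.trans (append_orbitTail_rel_orbitWord hrel _ a) ?_)
    rw [h]
    exact c.symm (append_orbitTail_rel_orbitWord hrel w a)

theorem exists_common_right_multiple (a b : c.Quotient) :
    ∃ u x y : c.Quotient, u = a * x ∧ u = b * y := by
  obtain ⟨x, rfl⟩ := c.mk'_surjective a
  obtain ⟨y, rfl⟩ := c.mk'_surjective b
  have hlen : (x.toList ++ y.toList).length = (y.toList ++ x.toList).length := by
    simp only [List.length_append, Nat.add_comm]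
  have hprefix : ∀ l r : List α,
      c.mk' (ofList (l ++ r)) = c.mk' (ofList l) * c.mk' (ofList r) := fun l r => by
    rw [ofList_append, map_mul]
  refine ⟨c.mk' (ofList (x.toList ++ y.toList ++ orbitTail f (x.toList ++ y.toList))),
    c.mk' (ofList (y.toList ++ orbitTail f (x.toList ++ y.toList))),
    c.mk' (ofList (x.toList ++ orbitTail f (y.toList ++ x.toList))), ?_, ?_⟩
  · rw [List.append_assoc, hprefix, ofList_toList]
  · rw [mk'_append_orbitTail_eq hrel hlen, List.append_assoc, hprefix, ofList_toList]

end FreeMonoid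

theorem stmt9_general (n : ℕ) (f : Fin n → Fin n)
    (c : Con (FreeMonoid (Fin n)))
    (hc : c = conGen fun u v => ∃ i j : Fin n,
      u = FreeMonoid.of i * FreeMonoid.of (f i) ∧
      v = FreeMonoid.of j * FreeMonoid.of (f j)) :
    (∀ v w : List (Fin n), v.length = w.length →
      c.mk' (FreeMonoid.ofList
        (v ++ (v.reverse.zipIdx.map fun p => f^[2 * p.2 + 1] p.1))) =
      c.mk' (FreeMonoid.ofList
        (w ++ (w.reverse.zipIdx.map fun p => f^[2 * p.2 + 1] p.1)))) ∧
    (∀ a b : c.Quotient, ∃ u x y : c.Quotient, u = a * x ∧ u = b * y) := by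
  have hrel : ∀ i j, c (of i * of (f i)) (of j * of (f j)) := fun i j =>
    hc ▸ ConGen.Rel.of _ _ ⟨i, j, rfl, rfl⟩
  exact ⟨fun v w => mk'_append_orbitTail_eq hrel, exists_common_right_multiple hrel⟩

/-- In `M(f)`, for any two words `v = s_{i_1}⋯s_{i_k}` and `w = s_{j_1}⋯s_{j_k}` of the same
length, `s_{i_1}⋯s_{i_k} s_{f(i_k)} s_{f³(i_{k-1})} ⋯ s_{f^{2k-1}(i_1)} =
s_{j_1}⋯s_{j_k} s_{f(j_k)} s_{f³(j_{k-1})} ⋯ s_{f^{2k-1}(j_1)}`.  In particular, any two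
elements of `M(f)` have a common right multiple. -/
theorem stmt9 (n : ℕ) (hn : 2 ≤ n) (f : Fin n → Fin n)
    (c : Con (FreeMonoid (Fin n)))
    (hc : c = conGen fun u v => ∃ i j : Fin n,
      u = FreeMonoid.of i * FreeMonoid.of (f i) ∧
      v = FreeMonoid.of j * FreeMonoid.of (f j)) :
    (∀ v w : List (Fin n), v.length = w.length →
      c.mk' (FreeMonoid.ofList
        (v ++ (v.reverse.zipIdx.map fun p => f^[2 * p.2 + 1] p.1))) =
      c.mk' (FreeMonoid.ofList
        (w ++ (w.reverse.zipIdx.map fun p => f^[2 * p.2 + 1] p.1)))) ∧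
    (∀ a b : c.Quotient, ∃ u x y : c.Quotient, u = a * x ∧ u = b * y) :=
  stmt9_general n f c hc
end

section
/- Fix n ≥ 2 and f : [n] → [n], and let M(f) = ⟨s_1,…,s_n ∣ s_1 s_{f(1)} = ⋯ = s_n s_{f(n)}⟩. Then for distinct atoms s_i and s_j (i ≠ j), the element s_i s_{f(i)} = s_j s_{f(j)} is the least common right multiple of s_i and s_j under left divisibility: any u ∈ M(f) with s_i ≤_L u and s_j ≤_L u satisfies s_i s_{f(i)} ≤_L u. -/
/-!
Every defining relation identifies two words that contain a factor `a · f a` (a pair factor), so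
"equal, or both have a pair factor" is a congruence containing the relations: a word equivalent to
a different word has a pair factor. Conversely, such a word is equivalent to `k · f k · t` for
every letter `k` and some `t`, because in `b · (a · f a)` the pair factor can be replaced by
`f b · f (f b)`, which creates the pair factor `b · f b` one letter further left. Two
representatives of `u`, one starting with `i` and one with `j ≠ i`, are different words, so `u`
has a pair factor and hence is left-divisible by `s_i s_{f i}`.
-/

namespace FreeMonoid

variable {α : Type*} (f : α → α)

def pairRel (u v : FreeMonoid α) : Prop :=
  ∃ a b : α, u = of a * of (f a) ∧ v = of b * of (f b)

def HasPairFactor (w : FreeMonoid α) : Prop :=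
  ∃ (l r : FreeMonoid α) (a : α), w = l * (of a * of (f a)) * r

variable {f}

lemma HasPairFactor.mul_right {w : FreeMonoid α} (h : HasPairFactor f w) (u : FreeMonoid α) :
    HasPairFactor f (w * u) := by
  obtain ⟨l, r, a, rfl⟩ := h
  exact ⟨l, r * u, a, by simp only [mul_assoc]⟩

lemma HasPairFactor.mul_left {w : FreeMonoid α} (h : HasPairFactor f w) (u : FreeMonoid α) :
    HasPairFactor f (u * w) := by
  obtain ⟨l, r, a, rfl⟩ := h
  exact ⟨u * l, r, a, by simp only [mul_assoc]⟩

variable (f)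

def pairFactorCon : Con (FreeMonoid α) where
  r w v := w = v ∨ (HasPairFactor f w ∧ HasPairFactor f v)
  iseqv :=
    { refl _ := .inl rfl
      symm := by
        rintro _ _ (rfl | ⟨hw, hv⟩)
        exacts [.inl rfl, .inr ⟨hv, hw⟩]
      trans := by
        rintro _ _ _ (rfl | ⟨hw, hv⟩) (rfl | ⟨hv', hu⟩)
        exacts [.inl rfl, .inr ⟨hv', hu⟩, .inr ⟨hw, hv⟩, .inr ⟨hw, hu⟩] }
  mul' := by
    rintro w _ w' _ (rfl | ⟨h₁, h₂⟩) (rfl | ⟨h₃, h₄⟩)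
    exacts [.inl rfl, .inr ⟨h₃.mul_left w, h₄.mul_left w⟩,
      .inr ⟨h₁.mul_right w', h₂.mul_right w'⟩, .inr ⟨h₁.mul_right w', h₂.mul_right _⟩]

lemma conGen_pairRel_le_pairFactorCon : conGen (pairRel f) ≤ pairFactorCon f :=
  Con.conGen_le.mpr <| by
    rintro _ _ ⟨a, b, rfl, rfl⟩
    exact .inr ⟨⟨1, 1, a, by simp⟩, ⟨1, 1, b, by simp⟩⟩

variable {f}

lemma hasPairFactor_of_conGen_pairRel {w v : FreeMonoid α} (h : conGen (pairRel f) w v)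
    (hne : w ≠ v) : HasPairFactor f w :=
  ((conGen_pairRel_le_pairFactorCon f h).resolve_left hne).1

lemma exists_conGen_pairRel_pair_mul (l r : FreeMonoid α) (a k : α) :
    ∃ t, conGen (pairRel f) (l * (of a * of (f a)) * r) (of k * of (f k) * t) := by
  have swap (a b : α) : conGen (pairRel f) (of a * of (f a)) (of b * of (f b)) :=
    ConGen.Rel.of _ _ ⟨a, b, rfl, rfl⟩
  induction l using FreeMonoid.inductionOn' generalizing k with
  | one => exact ⟨r, by simpa using (conGen (pairRel f)).mul (swap a k) (.refl r)⟩
  | of_mul b l ih =>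
    obtain ⟨t, ht⟩ := ih (f b)
    refine ⟨of (f (f b)) * t, ?_⟩
    have hb := (conGen (pairRel f)).mul (.refl (of b)) ht
    have hk := (conGen (pairRel f)).mul (swap b k) (.refl (of (f (f b)) * t))
    simp only [mul_assoc] at hb hk ⊢
    exact hb.trans hk

lemma HasPairFactor.exists_conGen_pairRel {w : FreeMonoid α} (h : HasPairFactor f w) (k : α) :
    ∃ t, conGen (pairRel f) w (of k * of (f k) * t) := by
  obtain ⟨l, r, a, rfl⟩ := h
  exact exists_conGen_pairRel_pair_mul l r a k

end FreeMonoid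

open FreeMonoid in
theorem stmt10_general (n : ℕ) (f : Fin n → Fin n)
    (c : Con (FreeMonoid (Fin n)))
    (hc : c = conGen fun u v => ∃ i j : Fin n,
      u = FreeMonoid.of i * FreeMonoid.of (f i) ∧
      v = FreeMonoid.of j * FreeMonoid.of (f j))
    (i j : Fin n) (hij : i ≠ j) :
    ∀ u : c.Quotient,
      (∃ x, u = c.mk' (FreeMonoid.of i) * x) →
      (∃ y, u = c.mk' (FreeMonoid.of j) * y) →
      ∃ z, u = c.mk' (FreeMonoid.of i * FreeMonoid.of (f i)) * z := by
  rintro _ ⟨x, rfl⟩ ⟨y, hy⟩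
  obtain ⟨x, rfl⟩ := c.mk'_surjective x
  obtain ⟨y, rfl⟩ := c.mk'_surjective y
  rw [← map_mul, ← map_mul] at hy
  replace hy := hc ▸ (Con.eq c).mp hy
  have hne : of i * x ≠ of j * y := fun h ↦ hij (by simpa using congrArg (·.toList.head?) h)
  obtain ⟨t, ht⟩ := (hasPairFactor_of_conGen_pairRel (f := f) hy hne).exists_conGen_pairRel i
  exact ⟨c.mk' t, by rw [← map_mul, ← map_mul]; exact (Con.eq c).mpr (hc ▸ ht)⟩

/-- In `M(f)`, for distinct atoms `s_i`, `s_j`, the element `s_i s_{f(i)} = s_j s_{f(j)}`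
is the least common right multiple of `s_i` and `s_j` under left divisibility. -/
theorem stmt10 (n : ℕ) (hn : 2 ≤ n) (f : Fin n → Fin n)
    (c : Con (FreeMonoid (Fin n)))
    (hc : c = conGen fun u v => ∃ i j : Fin n,
      u = FreeMonoid.of i * FreeMonoid.of (f i) ∧
      v = FreeMonoid.of j * FreeMonoid.of (f j))
    (i j : Fin n) (hij : i ≠ j) :
    ∀ u : c.Quotient,
      (∃ x, u = c.mk' (FreeMonoid.of i) * x) →
      (∃ y, u = c.mk' (FreeMonoid.of j) * y) →
      ∃ z, u = c.mk' (FreeMonoid.of i * FreeMonoid.of (f i)) * z :=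
  stmt10_general n f c hc i j hij
end

section
/- Let f : [n] → [n] be a bijection with n ≥ 2, and let M(f) = ⟨s_1,…,s_n ∣ s_1 s_{f(1)} = ⋯ = s_n s_{f(n)}⟩. Then M(f) is right-cancellative: ba = ca implies b = c for all a, b, c ∈ M(f). -/
/-!
Every element of `M(f)` is `Δ ^ p * w`, where `Δ` is the common value of the `s_i s_{f i}` and the
word `w` contains no factor `s_i s_{f i}`. Since `s_x Δ = Δ s_{f (f x)}`, right multiplication by a
generator acts on such normal forms: it appends the letter, or turns a final `s_b s_{f b}` into `Δ`
and moves that `Δ` to the front. This right action satisfies the defining relations, and for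
injective `f` every generator acts injectively. As each word evaluates back from its normal form,
generators, and hence all elements, are right-cancellable.
-/

open Function FreeMonoid

namespace PairPresentation

variable {α : Type*} {f : α → α}

variable (f) in
def rel (u v : FreeMonoid α) : Prop :=
  ∃ i j : α, u = of i * of (f i) ∧ v = of j * of (f j)

variable (f) in
abbrev M : Type _ := (conGen (rel f)).Quotient

variable (f) in
abbrev toM : FreeMonoid α →* M f := (conGen (rel f)).mk'

variable (f) in
/-- The common value `Δ` of the products `s_i s_{f i}`, named by any one of them. -/
abbrev delta (k : α) : M f := toM f (of k * of (f k))

theorem delta_eq (i j : α) : delta f i = delta f j :=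
  (Con.eq _).2 (ConGen.Rel.of _ _ ⟨i, j, rfl, rfl⟩)

theorem toM_mul_delta (k : α) (u : FreeMonoid α) :
    toM f u * delta f k = delta f k * toM f (map (f ∘ f) u) := by
  induction u using FreeMonoid.inductionOn' with
  | one => simp
  | of_mul x u ih =>
    calc toM f (of x * u) * delta f k
        = toM f (of x) * delta f k * toM f (map (f ∘ f) u) := by
          rw [map_mul, mul_assoc, ih, mul_assoc]
      _ = toM f (of x) * delta f (f x) * toM f (map (f ∘ f) u) := by rw [delta_eq k]
      _ = delta f x * toM f (of (f (f x))) * toM f (map (f ∘ f) u) := by simp [mul_assoc]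
      _ = delta f k * toM f (map (f ∘ f) (of x * u)) := by rw [delta_eq x k]; simp [mul_assoc]

variable (f) in
/-- The normal form `Δ ^ power * revWord.reverse`. The word is stored reversed so that right
multiplication by a generator acts on its head; `isChain` says it contains no factor `s_i s_{f i}`. -/
structure NormalForm where
  power : ℕ
  revWord : List α
  isChain : revWord.IsChain fun x y => x ≠ f y

namespace NormalForm

theorem isChain_map_comp_self (hf : Injective f) {r : List α} (h : r.IsChain fun x y => x ≠ f y) :
    (r.map (f ∘ f)).IsChain fun x y => x ≠ f y :=
  List.isChain_map _ |>.2 <| h.imp fun _ _ hxy heq => hxy (hf (hf heq))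

def mulDelta (hf : Injective f) (s : NormalForm f) : NormalForm f :=
  ⟨s.power + 1, s.revWord.map (f ∘ f), isChain_map_comp_self hf s.isChain⟩

theorem map_ne_cons_of_isChain_cons (hf : Injective f) {b k : α} {t r : List α}
    (h : (b :: t).IsChain fun x y => x ≠ f y) (hk : k = f b) : t.map (f ∘ f) ≠ k :: r := by
  rcases t with _ | ⟨x, t⟩
  · simp
  · intro heq
    exact (List.isChain_cons_cons.1 h).1 (hf ((List.cons.inj heq).1.trans hk)).symm

def empty : NormalForm f := ⟨0, [], .nil⟩

variable (f) in
def eval (k : α) (s : NormalForm f) : M f :=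
  delta f k ^ s.power * toM f (ofList s.revWord.reverse)

theorem eval_empty (k : α) : eval f k empty = 1 := by
  simp [eval, empty]

theorem eval_mulDelta (hf : Injective f) (k : α) (s : NormalForm f) :
    eval f k (s.mulDelta hf) = eval f k s * delta f k := by
  simp only [eval, mulDelta, ← List.map_reverse, ofList_map, pow_succ, mul_assoc, toM_mul_delta]

end NormalForm

variable [DecidableEq α]

namespace NormalForm

def mulOf (hf : Injective f) : NormalForm f → α → NormalForm f
  | ⟨p, [], _⟩, k => ⟨p, [k], List.isChain_singleton k⟩
  | ⟨p, b :: t, h⟩, k =>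
    if hk : k = f b then mulDelta hf ⟨p, t, h.tail⟩ else ⟨p, k :: b :: t, h.cons_cons hk⟩

theorem mulOf_of_isChain (hf : Injective f) {s : NormalForm f} {k : α}
    (h : (k :: s.revWord).IsChain fun x y => x ≠ f y) :
    s.mulOf hf k = ⟨s.power, k :: s.revWord, h⟩ := by
  obtain ⟨p, _ | ⟨b, t⟩, _⟩ := s
  · rfl
  · simp [mulOf, (List.isChain_cons_cons.1 h).1]

theorem mulOf_mulOf (hf : Injective f) (s : NormalForm f) (i : α) :
    (s.mulOf hf i).mulOf hf (f i) = s.mulDelta hf := by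
  obtain ⟨p, _ | ⟨b, t⟩, h⟩ := s
  · simp [mulOf, mulDelta]
  · by_cases hi : i = f b
    · subst hi
      simp only [mulOf, ↓reduceDIte]
      exact mulOf_of_isChain hf (s := mulDelta hf ⟨p, t, h.tail⟩) (k := f (f b))
        (mulDelta hf ⟨p, b :: t, h⟩).isChain
    · simp [mulOf, hi]

theorem mulOf_injective (hf : Injective f) (k : α) : Injective (mulOf hf · k) := by
  rintro ⟨p, _ | ⟨b, t⟩, h⟩ ⟨p', _ | ⟨b', t'⟩, h'⟩ heq <;>
    simp only [mulOf, mulDelta] at heq <;> (try split_ifs at heq) <;>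
    simp only [NormalForm.mk.injEq, List.cons.injEq] at heq ⊢
  -- after a cancellation the new word cannot start with `k`, as consecutive letters satisfy `b ≠ f x`
  all_goals first
    | exact absurd heq.2 (map_ne_cons_of_isChain_cons hf h ‹_›)
    | exact absurd heq.2.symm (map_ne_cons_of_isChain_cons hf h' ‹_›)
    | exact ⟨by omega, hf ((‹k = f b›).symm.trans ‹_›), List.map_injective_iff.2 (hf.comp hf) heq.2⟩
    | simp_all

theorem eval_mulOf (hf : Injective f) (k : α) (s : NormalForm f) (j : α) :
    eval f k (s.mulOf hf j) = eval f k s * toM f (of j) := by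
  obtain ⟨p, _ | ⟨b, t⟩, h⟩ := s
  · simp [mulOf, eval]
  · by_cases hj : j = f b
    · subst hj
      simp only [mulOf, ↓reduceDIte, eval_mulDelta, delta_eq k b]
      simp [eval, mul_assoc]
    · simp [mulOf, hj, eval, mul_assoc]

end NormalForm

open NormalForm

variable (f) in
def act (hf : Injective f) : FreeMonoid α →* (Function.End (NormalForm f))ᵐᵒᵖ :=
  lift fun k => .op fun s => s.mulOf hf k

theorem act_of_apply (hf : Injective f) (k : α) (s : NormalForm f) :
    (act f hf (of k)).unop s = s.mulOf hf k :=
  rfl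

theorem act_mul_apply (hf : Injective f) (u v : FreeMonoid α) (s : NormalForm f) :
    (act f hf (u * v)).unop s = (act f hf v).unop ((act f hf u).unop s) := by
  rw [map_mul]
  rfl

theorem conGen_le_ker_act (hf : Injective f) : conGen (rel f) ≤ Con.ker (act f hf) := by
  refine Con.conGen_le.2 ?_
  rintro _ _ ⟨i, j, rfl, rfl⟩
  refine (Con.ker_rel _).2 (MulOpposite.unop_injective (funext fun s => ?_))
  simp only [act_mul_apply, act_of_apply, mulOf_mulOf]

theorem eval_act (hf : Injective f) (k : α) (u : FreeMonoid α) (s : NormalForm f) :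
    eval f k ((act f hf u).unop s) = eval f k s * toM f u := by
  induction u using FreeMonoid.inductionOn' generalizing s with
  | one => simp [Function.End.one_def]
  | of_mul b u ih => rw [act_mul_apply, ih, act_of_apply, eval_mulOf, map_mul, mul_assoc]

theorem isRightRegular_toM_of (hf : Injective f) (k : α) : IsRightRegular (toM f (of k)) := by
  intro x y hxy
  obtain ⟨u, rfl⟩ := Con.mk'_surjective x
  obtain ⟨v, rfl⟩ := Con.mk'_surjective y
  have hact : act f hf (u * of k) = act f hf (v * of k) :=
    (Con.ker_rel _).1 <| conGen_le_ker_act hf <| (Con.eq _).1 <| by simpa using hxy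
  have hnf : (act f hf u).unop empty = (act f hf v).unop empty := by
    refine mulOf_injective hf k ?_
    simpa only [act_mul_apply, act_of_apply] using congrArg (fun g => g.unop empty) hact
  calc toM f u = eval f k ((act f hf u).unop empty) := by rw [eval_act, eval_empty, one_mul]
    _ = toM f v := by rw [hnf, eval_act, eval_empty, one_mul]

theorem isRightRegular (hf : Injective f) (a : M f) : IsRightRegular a := by
  obtain ⟨u, rfl⟩ := Con.mk'_surjective a
  induction u using FreeMonoid.inductionOn' with
  | one => simpa using (isRegular_one (R := M f)).right
  | of_mul k u ih => simpa using (isRightRegular_toM_of hf k).mul ih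

end PairPresentation

theorem stmt11_general (n : ℕ) (f : Fin n → Fin n) (hf : Function.Bijective f)
    (c : Con (FreeMonoid (Fin n)))
    (hc : c = conGen fun u v => ∃ i j : Fin n,
      u = FreeMonoid.of i * FreeMonoid.of (f i) ∧
      v = FreeMonoid.of j * FreeMonoid.of (f j)) :
    ∀ a b d : c.Quotient, b * a = d * a → b = d := by
  subst hc
  exact fun a _ _ h => PairPresentation.isRightRegular hf.injective a h

/-- If `f : [n] → [n]` is a bijection, then `M(f)` is right-cancellative. -/
theorem stmt11 (n : ℕ) (hn : 2 ≤ n) (f : Fin n → Fin n) (hf : Function.Bijective f)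
    (c : Con (FreeMonoid (Fin n)))
    (hc : c = conGen fun u v => ∃ i j : Fin n,
      u = FreeMonoid.of i * FreeMonoid.of (f i) ∧
      v = FreeMonoid.of j * FreeMonoid.of (f j)) :
    ∀ a b d : c.Quotient, b * a = d * a → b = d :=
  stmt11_general n f hf c hc
end

section
/- In the monoid M = ⟨a, b, c ∣ aa = ba, bb = cb, ab = cc⟩, the equality c·a·a = c·c·a holds, but a·a ≠ c·a; hence M is not left-cancellative. -/
def presentationRel (u v : FreeMonoid (Fin 3)) : Prop :=
  (u = FreeMonoid.ofList [0, 0] ∧ v = FreeMonoid.ofList [1, 0]) ∨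
  (u = FreeMonoid.ofList [1, 1] ∧ v = FreeMonoid.ofList [2, 1]) ∨
  (u = FreeMonoid.ofList [0, 1] ∧ v = FreeMonoid.ofList [2, 2])

theorem mul_mul_eq_mul_mul_of_relations {M : Type*} [Monoid M] {a b c : M}
    (hab : a * a = b * a) (hbc : b * b = c * b) (hac : a * b = c * c) :
    c * a * a = c * c * a :=
  calc c * a * a = c * b * a := by rw [mul_assoc, hab, ← mul_assoc]
    _ = b * b * a := by rw [hbc]
    _ = b * a * a := by rw [mul_assoc, mul_assoc, hab]
    _ = a * a * a := by rw [← hab]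
    _ = a * b * a := by rw [mul_assoc, hab, ← mul_assoc]
    _ = c * c * a := by rw [hac]

/-- `a`, `b`, `c` act on `{0, 1, 2}` so that both sides of every relation are the constant map
`0`, whereas `ca` fixes `2`. -/
def presentationRep : FreeMonoid (Fin 3) →* Function.End (Fin 3) :=
  FreeMonoid.lift ![![0, 0, 1], ![0, 0, 0], ![0, 2, 0]]

theorem conGen_presentationRel_le_ker : conGen presentationRel ≤ Con.ker presentationRep := by
  refine Con.conGen_le.mpr ?_
  rintro u v (⟨rfl, rfl⟩ | ⟨rfl, rfl⟩ | ⟨rfl, rfl⟩) <;>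
    exact funext fun i => by fin_cases i <;> rfl

/-- In the monoid `M = ⟨a, b, c ∣ aa = ba, bb = cb, ab = cc⟩` (with `a = 0`, `b = 1`,
`c = 2`), we have `caa = cca` but `aa ≠ ca`; hence `M` is not left-cancellative. -/
theorem stmt13 (c : Con (FreeMonoid (Fin 3)))
    (hc : c = conGen fun u v =>
      (u = FreeMonoid.ofList [0, 0] ∧ v = FreeMonoid.ofList [1, 0]) ∨
      (u = FreeMonoid.ofList [1, 1] ∧ v = FreeMonoid.ofList [2, 1]) ∨
      (u = FreeMonoid.ofList [0, 1] ∧ v = FreeMonoid.ofList [2, 2])) :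
    c.mk' (FreeMonoid.ofList [2, 0, 0]) = c.mk' (FreeMonoid.ofList [2, 2, 0]) ∧
    c.mk' (FreeMonoid.ofList [0, 0]) ≠ c.mk' (FreeMonoid.ofList [2, 0]) ∧
    ¬ ∀ x y z : c.Quotient, x * y = x * z → y = z := by
  change c = conGen presentationRel at hc
  subst hc
  let gen (i : Fin 3) := (conGen presentationRel).mk' (FreeMonoid.of i)
  have rel {u v} (h : presentationRel u v) : (conGen presentationRel).mk' u =
      (conGen presentationRel).mk' v :=
    (Con.eq _).2 (.of u v h)
  have hcaa : gen 2 * gen 0 * gen 0 = gen 2 * gen 2 * gen 0 :=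
    mul_mul_eq_mul_mul_of_relations (a := gen 0) (b := gen 1)
      (rel (.inl ⟨rfl, rfl⟩)) (rel (.inr (.inl ⟨rfl, rfl⟩))) (rel (.inr (.inr ⟨rfl, rfl⟩)))
  have haa : gen 0 * gen 0 ≠ gen 2 * gen 0 := fun h =>
    absurd (congrFun (conGen_presentationRel_le_ker ((Con.eq _).1 h)) 2) (by decide)
  exact ⟨hcaa, haa, fun h => haa (h _ _ _ (by rw [← mul_assoc, hcaa, mul_assoc]))⟩
end

section
/- Let 𝓛 be a finite-type ℕ-graded upho lattice with core M_n (the rank-two lattice with n ≥ 2 atoms), and suppose that for each i with 1 ≤ i ≤ k (some fixed k ≥ 3), there is an element of rank i in 𝓛 covering all elements of rank i−1. Then there is an element of rank k+1 in 𝓛 covering all elements of rank k. -/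
/-!
Let `y` be an element of rank `k - 1` covering every element of rank `k - 2`, and let `a ≠ b` be
two of its covers, which exist because the core is `M_n` with `n ≥ 2`. Every element `z` of rank
`k` lies two steps above some `v` of rank `k - 2`, and `v ⋖ y ≤ a, b`. Transporting the element
of rank `3` covering all of rank `2` along an isomorphism `[v, ∞) ≃o 𝓛` gives some `d` covering
every element of rank `k` above `v`; as `a` and `b` are two of them, `d = a ⊔ b`. Hence `a ⊔ b`
covers every `z` of rank `k`.
-/

namespace Upho

variable {P : Type*}

theorem coe_covBy_coe_iff [PartialOrder P] {v : P} {a b : {q : P // v ≤ q}} :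
    (a : P) ⋖ b ↔ a ⋖ b :=
  Set.OrdConnected.apply_covBy_apply_iff (OrderEmbedding.subtype fun c => v ≤ c) <| by
    simpa only [OrderEmbedding.coe_subtype, Subtype.range_coe_subtype] using! Set.ordConnected_Ici

section Rank

variable [PartialOrder P] [OrderBot P] {ρ : P → ℕ}

theorem eq_bot_of_rank_eq_zero (hcov : ∀ x y : P, x ⋖ y → ρ y = ρ x + 1)
    (hdown : ∀ x : P, x ≠ ⊥ → ∃ y, y ⋖ x) {x : P} (hx : ρ x = 0) : x = ⊥ := by
  by_contra hne
  obtain ⟨y, hyx⟩ := hdown x hne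
  have := hcov y x hyx
  omega

theorem exists_covBy_of_rank_eq_succ (hρ0 : ρ ⊥ = 0) (hcov : ∀ x y : P, x ⋖ y → ρ y = ρ x + 1)
    (hdown : ∀ x : P, x ≠ ⊥ → ∃ y, y ⋖ x) {x : P} {j : ℕ} (hx : ρ x = j + 1) :
    ∃ y, y ⋖ x ∧ ρ y = j := by
  obtain ⟨y, hyx⟩ := hdown x (by rintro rfl; omega)
  have := hcov y x hyx
  exact ⟨y, hyx, by omega⟩

theorem rank_eq_add_rank_apply (hρ0 : ρ ⊥ = 0) (hcov : ∀ x y : P, x ⋖ y → ρ y = ρ x + 1)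
    (hdown : ∀ x : P, x ≠ ⊥ → ∃ y, y ⋖ x) {v : P} (e : {q : P // v ≤ q} ≃o P)
    (q : {q : P // v ≤ q}) : ρ q = ρ v + ρ (e q) := by
  generalize hm : ρ (e q) = m
  induction m generalizing q with
  | zero =>
    have hqv : q ≤ ⟨v, le_rfl⟩ := by
      rw [← e.le_iff_le, eq_bot_of_rank_eq_zero hcov hdown hm]
      exact bot_le
    rw [le_antisymm hqv q.2]
    rfl
  | succ m ih =>
    obtain ⟨y, hy, hym⟩ := exists_covBy_of_rank_eq_succ hρ0 hcov hdown hm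
    have hyq : ((e.symm y : {q : P // v ≤ q}) : P) ⋖ q :=
      coe_covBy_coe_iff.mpr <| (apply_covBy_apply_iff e).mp <| by rwa [e.apply_symm_apply]
    have := hcov _ _ hyq
    have := ih (e.symm y) (by rwa [e.apply_symm_apply])
    omega

theorem covBy_symm_apply (hρ0 : ρ ⊥ = 0) (hcov : ∀ x y : P, x ⋖ y → ρ y = ρ x + 1)
    (hdown : ∀ x : P, x ≠ ⊥ → ∃ y, y ⋖ x) {x : P} {j : ℕ} (hx : ∀ y, ρ y = j → y ⋖ x) {v : P}
    (e : {q : P // v ≤ q} ≃o P) {q : P} (hvq : v ≤ q) (hq : ρ q = ρ v + j) :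
    q ⋖ (e.symm x : P) := by
  have hrank := rank_eq_add_rank_apply hρ0 hcov hdown e ⟨q, hvq⟩
  have hcovx : e ⟨q, hvq⟩ ⋖ e (e.symm x) := by
    rw [e.apply_symm_apply]
    exact hx _ (by simp only at hrank; omega)
  exact coe_covBy_coe_iff.mpr <| (apply_covBy_apply_iff e).mp hcovx

end Rank

theorem covBy_sup_of_forall_covBy [Lattice P] [OrderBot P] {ρ : P → ℕ} (hρ0 : ρ ⊥ = 0)
    (hcov : ∀ x y : P, x ⋖ y → ρ y = ρ x + 1) (hdown : ∀ x : P, x ≠ ⊥ → ∃ y, y ⋖ x)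
    (hupho : ∀ p : P, Nonempty ({q : P // p ≤ q} ≃o P)) {x : P} {j : ℕ}
    (hx : ∀ y, ρ y = j → y ⋖ x) {v a b q : P} (hab : a ≠ b) (hva : v ≤ a) (hvb : v ≤ b)
    (ha : ρ a = ρ v + j) (hb : ρ b = ρ v + j) (hvq : v ≤ q) (hq : ρ q = ρ v + j) :
    q ⋖ a ⊔ b := by
  obtain ⟨e⟩ := hupho v
  have hsup : a ⊔ b = e.symm x :=
    WCovBy.sup_eq (covBy_symm_apply hρ0 hcov hdown hx e hva ha).wcovBy
      (covBy_symm_apply hρ0 hcov hdown hx e hvb hb).wcovBy hab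
  rw [hsup]
  exact covBy_symm_apply hρ0 hcov hdown hx e hvq hq

end Upho

theorem stmt15_general {P : Type*} [Lattice P] [OrderBot P] (n : ℕ) (hn : 2 ≤ n)
    (ρ : P → ℕ) (hρ0 : ρ ⊥ = 0) (hcov : ∀ x y : P, x ⋖ y → ρ y = ρ x + 1)
    (hdown : ∀ x : P, x ≠ ⊥ → ∃ y, y ⋖ x)
    (hupho : ∀ p : P, Nonempty ({q : P // p ≤ q} ≃o P))
    -- the core is `M_n`: the covers of each `x` are `n` in number, and their join `m`
    -- covers each of them
    (hcore : ∀ x : P, ∃ m : P, IsLUB {y | x ⋖ y} m ∧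
      Nat.card {y : P // x ⋖ y} = n ∧ ∀ y : P, x ⋖ y → y ⋖ m)
    (k : ℕ) (hk : 3 ≤ k)
    (hdom : ∀ i : ℕ, 1 ≤ i → i ≤ k →
      ∃ x : P, ρ x = i ∧ ∀ y : P, ρ y = i - 1 → y ⋖ x) :
    ∃ x : P, ρ x = k + 1 ∧ ∀ y : P, ρ y = k → y ⋖ x := by
  obtain ⟨y, hy, hydom⟩ := hdom (k - 1) (by omega) (by omega)
  obtain ⟨x₃, -, hx₃⟩ := hdom 3 (by omega) hk
  obtain ⟨-, -, hcard, -⟩ := hcore y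
  have : Finite {a : P // y ⋖ a} := Nat.finite_of_card_ne_zero (by omega)
  have : Nontrivial {a : P // y ⋖ a} := by
    rw [← Finite.one_lt_card_iff_nontrivial, hcard]
    omega
  obtain ⟨⟨a, ha⟩, ⟨b, hb⟩, hab⟩ := exists_pair_ne {a : P // y ⋖ a}
  have hρa := hcov y a ha
  have hρb := hcov y b hb
  have hcovers : ∀ z : P, ρ z = k → z ⋖ a ⊔ b := by
    intro z hz
    obtain ⟨w, hwz, hw⟩ := Upho.exists_covBy_of_rank_eq_succ hρ0 hcov hdown
      (show ρ z = k - 1 + 1 by omega)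
    obtain ⟨v, hvw, hv⟩ := Upho.exists_covBy_of_rank_eq_succ hρ0 hcov hdown
      (show ρ w = k - 2 + 1 by omega)
    have hvy : v ⋖ y := hydom v (by omega)
    exact Upho.covBy_sup_of_forall_covBy hρ0 hcov hdown hupho (j := 2) hx₃
      (fun h => hab (Subtype.ext h)) (hvy.le.trans ha.le) (hvy.le.trans hb.le) (by omega)
      (by omega) (hvw.le.trans hwz.le) (by omega)
  have := hcov a _ (hcovers a (by omega))
  exact ⟨a ⊔ b, by omega, hcovers⟩

/-- In an upho lattice with core `M_n`, if for each `1 ≤ i ≤ k` (with `k ≥ 3`) there is an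
element of rank `i` covering all elements of rank `i-1`, then there is an element of rank
`k+1` covering all elements of rank `k`. -/
theorem stmt15 {P : Type*} [Lattice P] [OrderBot P] (n : ℕ) (hn : 2 ≤ n)
    (ρ : P → ℕ) (hρ0 : ρ ⊥ = 0) (hcov : ∀ x y : P, x ⋖ y → ρ y = ρ x + 1)
    (hdown : ∀ x : P, x ≠ ⊥ → ∃ y, y ⋖ x)
    (hfin : ∀ i : ℕ, {x : P | ρ x = i}.Finite)
    (hupho : ∀ p : P, Nonempty ({q : P // p ≤ q} ≃o P))
    -- the core is `M_n`: the covers of each `x` are `n` in number, and their join `m`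
    -- covers each of them
    (hcore : ∀ x : P, ∃ m : P, IsLUB {y | x ⋖ y} m ∧
      Nat.card {y : P // x ⋖ y} = n ∧ ∀ y : P, x ⋖ y → y ⋖ m)
    (k : ℕ) (hk : 3 ≤ k)
    (hdom : ∀ i : ℕ, 1 ≤ i → i ≤ k →
      ∃ x : P, ρ x = i ∧ ∀ y : P, ρ y = i - 1 → y ⋖ x) :
    ∃ x : P, ρ x = k + 1 ∧ ∀ y : P, ρ y = k → y ⋖ x :=
  stmt15_general n hn ρ hρ0 hcov hdown hupho hcore k hk hdom
end

section
/- For n ≥ 2 and a partition λ = (λ_1,…,λ_ℓ) of n, let f_λ : [n] → [n] be the idempotent function whose fibers are the consecutive blocks of sizes λ_1,…,λ_ℓ, each mapped to its largest element (so f_λ(1)=⋯=f_λ(λ_1)=λ_1, f_λ(λ_1+1)=⋯=f_λ(λ_1+λ_2)=λ_1+λ_2, etc.). In the poset (M(f_λ), ≤_L), the element s_m³ where m = λ_1+⋯+λ_t (for each 1 ≤ t ≤ ℓ) has rank 3 and covers exactly λ_t(n−1)+1 elements of rank 2, and every other rank-3 element covers exactly one rank-2 element. -/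
/-
The defining relations of `M(f)` are homogeneous, so `M(f)` is graded by word length, and in such
a graded monoid `z` covers `y` exactly when `z = y s` for a generator `s`: the elements covered by
the class of a word `w` are the classes of the words obtained by deleting the last letter of a word
equivalent to `w`. For idempotent `f` the class of a word `a b c` of length 3 is found by closing
it under the rewriting `i f(i) ↦ j f(j)`. If `m` is a fixed point, the class of `m m m` consists of
the words `j k f(k)` with `f j = m` and `j f(j) m`, so `m m m` covers `m m` and the pairwise
distinct classes of the words `j k` with `f j = m`, `k ≠ m`: that is `|f⁻¹(m)| (n - 1) + 1`
elements. Every other class of length 3 is either a singleton or `{j f(j) c}` with `f c ≠ c`, and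
all its words have equivalent prefixes of length 2. For `f = f_λ` the fixed points are the block
ends `λ_1 + ⋯ + λ_t`, with fibres of size `λ_t`.
-/

/-- Left divisibility in a monoid. -/
def leL {M : Type*} [Monoid M] (a b : M) : Prop := ∃ c, b = a * c

/-- The covering relation of the left-divisibility order. -/
def covL {M : Type*} [Monoid M] (a b : M) : Prop :=
  (leL a b ∧ a ≠ b) ∧ ∀ w : M, (leL a w ∧ a ≠ w) → (leL w b ∧ w ≠ b) → False


section Graded

variable {M : Type*} [Monoid M] {ℓ : M → ℕ}

theorem length_lt_of_leL_of_ne (hmul : ∀ a b, ℓ (a * b) = ℓ a + ℓ b)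
    (hone : ∀ a, ℓ a = 0 → a = 1) {a b : M} (hab : leL a b) (hne : a ≠ b) : ℓ a < ℓ b := by
  obtain ⟨c, rfl⟩ := hab
  have hc : ℓ c ≠ 0 := fun h => hne (by rw [hone c h, mul_one])
  rw [hmul]
  omega

theorem covL_iff_exists_mul_of_length_eq_one (hmul : ∀ a b, ℓ (a * b) = ℓ a + ℓ b)
    (hone : ∀ a, ℓ a = 0 → a = 1) (hatom : ∀ a, ℓ a ≠ 0 → ∃ b x, a = b * x ∧ ℓ x = 1)
    {y z : M} : covL y z ↔ ∃ x, z = y * x ∧ ℓ x = 1 := by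
  constructor
  · rintro ⟨⟨⟨c, rfl⟩, hne⟩, hmin⟩
    have hc : ℓ c ≠ 0 := fun h => hne (by rw [hone c h, mul_one])
    obtain ⟨b, x, rfl, hx⟩ := hatom c hc
    suffices hb : b = 1 by exact ⟨x, by rw [hb, one_mul], hx⟩
    by_contra hb
    have hb' : ℓ b ≠ 0 := fun h => hb (hone b h)
    refine hmin (y * b) ⟨⟨b, rfl⟩, fun h => ?_⟩ ⟨⟨x, (mul_assoc _ _ _).symm⟩, fun h => ?_⟩
    · have := congrArg ℓ h
      rw [hmul] at this
      omega
    · have := congrArg ℓ h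
      rw [hmul, hmul, hmul] at this
      omega
  · rintro ⟨x, rfl, hx⟩
    have hlen : ℓ (y * x) = ℓ y + 1 := by rw [hmul, hx]
    refine ⟨⟨⟨x, rfl⟩, fun h => ?_⟩, fun w h₁ h₂ => ?_⟩
    · have := congrArg ℓ h
      omega
    · have := length_lt_of_leL_of_ne hmul hone h₁.1 h₁.2
      have := length_lt_of_leL_of_ne hmul hone h₂.1 h₂.2
      omega

end Graded

open Relation FreeMonoid

theorem reflTransGen_iff_mem_of_closed {β : Type*} {r : β → β → Prop} {S : Set β} {w v : β}
    (hS : ∀ u ∈ S, ∀ v, r u v → v ∈ S) (hw : w ∈ S) (hS' : ∀ v ∈ S, ReflTransGen r w v) :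
    ReflTransGen r w v ↔ v ∈ S := by
  refine ⟨fun h => ?_, hS' v⟩
  induction h with
  | refl => exact hw
  | tail _ hst ih => exact hS _ ih _ hst

section PairRelation

variable {α : Type*} {f : α → α}

variable (f) in
def PairStep (u v : List α) : Prop :=
  ∃ (p q : List α) (i j : α), u = p ++ i :: f i :: q ∧ v = p ++ j :: f j :: q

instance : Std.Symm (PairStep f) where
  symm _ _ := fun ⟨p, q, i, j, hu, hv⟩ => ⟨p, q, j, i, hv, hu⟩

theorem PairStep.length_eq {u v : List α} : PairStep f u v → u.length = v.length := by
  rintro ⟨p, q, i, j, rfl, rfl⟩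
  simp

theorem PairStep.append {u v : List α} (h : PairStep f u v) (p q : List α) :
    PairStep f (p ++ u ++ q) (p ++ v ++ q) := by
  obtain ⟨p', q', i, j, rfl, rfl⟩ := h
  exact ⟨p ++ p', q' ++ q, i, j, by simp, by simp⟩

theorem reflTransGen_pairStep_length_eq {u v : List α} (h : ReflTransGen (PairStep f) u v) :
    u.length = v.length := by
  induction h with
  | refl => rfl
  | tail _ hst ih => exact ih.trans hst.length_eq

theorem reflTransGen_pairStep_append {u v : List α} (h : ReflTransGen (PairStep f) u v)
    (p q : List α) : ReflTransGen (PairStep f) (p ++ u ++ q) (p ++ v ++ q) :=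
  ReflTransGen.lift (fun w => p ++ w ++ q) (fun _ _ hst => hst.append p q) u v h

theorem reflTransGen_pairStep_append_append {u u' v v' : List α}
    (hu : ReflTransGen (PairStep f) u u') (hv : ReflTransGen (PairStep f) v v') :
    ReflTransGen (PairStep f) (u ++ v) (u' ++ v') := by
  have h₁ := reflTransGen_pairStep_append hu [] v
  have h₂ := reflTransGen_pairStep_append hv u' []
  simp only [List.nil_append, List.append_nil] at h₁ h₂
  exact h₁.trans h₂

variable (f) in
/-- The congruence on `FreeMonoid α` presenting `M(f)`. -/
def pairCon : Con (FreeMonoid α) where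
  r x y := ReflTransGen (PairStep f) x.toList y.toList
  iseqv := ⟨fun _ => .refl, symm, .trans⟩
  mul' {w x y z} h₁ h₂ := by
    simpa using reflTransGen_pairStep_append_append h₁ h₂

theorem conGen_eq_pairCon :
    conGen (fun u v => ∃ i j : α, u = of i * of (f i) ∧ v = of j * of (f j)) = pairCon f := by
  refine le_antisymm (Con.conGen_le.mpr ?_) fun x y h => ?_
  · rintro _ _ ⟨i, j, rfl, rfl⟩
    exact .single ⟨[], [], i, j, rfl, rfl⟩
  · replace h : ReflTransGen (PairStep f) x.toList y.toList := h
    rw [← ofList_toList x, ← ofList_toList y]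
    generalize x.toList = u, y.toList = v at h ⊢
    induction h with
    | refl => exact Con.refl _ _
    | tail _ hst ih =>
      obtain ⟨p, q, i, j, hu, hv⟩ := hst
      refine Con.trans _ ih ?_
      have split (k : α) :
          ofList (p ++ k :: f k :: q) = ofList p * (of k * of (f k)) * ofList q := by
        simp [ofList_append, ofList_cons, mul_assoc]
      rw [hu, hv, split, split]
      exact Con.mul _ (Con.mul _ (Con.refl _ _) (ConGen.Rel.of _ _ ⟨i, j, rfl, rfl⟩)) (Con.refl _ _)

end PairRelation

section PairMonoid

variable {α : Type*} {f : α → α}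

theorem pairCon_mk_eq_iff {u v : List α} :
    (pairCon f).mk' (ofList u) = (pairCon f).mk' (ofList v) ↔ ReflTransGen (PairStep f) u v :=
  Con.eq _

theorem pairCon_exists_mk_ofList (q : (pairCon f).Quotient) :
    ∃ u, q = (pairCon f).mk' (ofList u) :=
  Con.induction_on q fun x => ⟨x.toList, by rw [ofList_toList]; rfl⟩

variable (f) in
def pairConLength (q : (pairCon f).Quotient) : ℕ :=
  q.liftOn FreeMonoid.length fun _ _ => reflTransGen_pairStep_length_eq

theorem pairConLength_mk (u : List α) : pairConLength f ((pairCon f).mk' (ofList u)) = u.length :=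
  rfl

theorem pairConLength_mul (a b : (pairCon f).Quotient) :
    pairConLength f (a * b) = pairConLength f a + pairConLength f b := by
  obtain ⟨u, rfl⟩ := pairCon_exists_mk_ofList a
  obtain ⟨v, rfl⟩ := pairCon_exists_mk_ofList b
  rw [← map_mul, ← ofList_append, pairConLength_mk, pairConLength_mk, pairConLength_mk,
    List.length_append]

theorem eq_one_of_pairConLength_eq_zero (a : (pairCon f).Quotient) (h : pairConLength f a = 0) :
    a = 1 := by
  obtain ⟨u, rfl⟩ := pairCon_exists_mk_ofList a
  rw [pairConLength_mk, List.length_eq_zero_iff] at h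
  subst h
  exact map_one _

theorem exists_eq_mul_of_pairConLength_ne_zero (a : (pairCon f).Quotient)
    (h : pairConLength f a ≠ 0) : ∃ b x, a = b * x ∧ pairConLength f x = 1 := by
  obtain ⟨u, rfl⟩ := pairCon_exists_mk_ofList a
  rw [pairConLength_mk, ne_eq, List.length_eq_zero_iff] at h
  refine ⟨(pairCon f).mk' (ofList u.dropLast), (pairCon f).mk' (ofList [u.getLast h]), ?_, rfl⟩
  rw [← map_mul, ← ofList_append, List.dropLast_append_getLast]

theorem setOf_covL_mk_eq_image {w : List α} (hw : w ≠ []) :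
    {y | covL y ((pairCon f).mk' (ofList w))} =
      (fun v => (pairCon f).mk' (ofList v.dropLast)) '' {v | ReflTransGen (PairStep f) w v} := by
  ext y
  rw [Set.mem_ofPred_eq, covL_iff_exists_mul_of_length_eq_one pairConLength_mul
    eq_one_of_pairConLength_eq_zero exists_eq_mul_of_pairConLength_ne_zero]
  constructor
  · rintro ⟨x, hyx, hx⟩
    obtain ⟨u, rfl⟩ := pairCon_exists_mk_ofList y
    obtain ⟨l, rfl⟩ := pairCon_exists_mk_ofList x
    obtain ⟨a, rfl⟩ := List.length_eq_one_iff.mp hx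
    rw [← map_mul, ← ofList_append, pairCon_mk_eq_iff] at hyx
    exact ⟨u ++ [a], hyx, congrArg (fun l => (pairCon f).mk' (ofList l)) List.dropLast_concat⟩
  · rintro ⟨v, hv, rfl⟩
    have hv₀ : v ≠ [] := by
      rw [← List.length_pos_iff, ← reflTransGen_pairStep_length_eq hv]
      exact List.length_pos_iff.mpr hw
    refine ⟨(pairCon f).mk' (ofList [v.getLast hv₀]), ?_, rfl⟩
    rw [← map_mul, ← ofList_append, List.dropLast_append_getLast, pairCon_mk_eq_iff]
    exact hv

end PairMonoid

section Triples

variable {α : Type*} {f : α → α}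

theorem PairStep.triple_cases {a b c : α} {v : List α} (h : PairStep f [a, b, c] v) :
    (b = f a ∧ ∃ j, v = [j, f j, c]) ∨ (c = f b ∧ ∃ j, v = [a, j, f j]) := by
  obtain ⟨p, q, i, j, hu, rfl⟩ := h
  rcases p with _ | ⟨x, _ | ⟨y, p⟩⟩
  · obtain ⟨rfl, rfl, rfl⟩ : a = i ∧ b = f i ∧ [c] = q := by simpa using hu
    exact .inl ⟨rfl, j, rfl⟩
  · obtain ⟨rfl, rfl, rfl, rfl⟩ : a = x ∧ b = i ∧ c = f i ∧ q = [] := by simpa using hu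
    exact .inr ⟨rfl, j, rfl⟩
  · have := congrArg List.length hu
    simp at this
    omega

theorem PairStep.not_isChain {u v : List α} (h : PairStep f u v) :
    ¬ u.IsChain (fun a b => b ≠ f a) := by
  obtain ⟨p, q, i, j, rfl, -⟩ := h
  intro hu
  exact List.isChain_pair.mp (hu.infix (l₁ := [i, f i]) ⟨p, q, by simp⟩) rfl

theorem reflTransGen_pairStep_iff_of_isChain {w v : List α}
    (hw : w.IsChain (fun a b => b ≠ f a)) : ReflTransGen (PairStep f) w v ↔ v = w := by
  refine ⟨fun h => ?_, fun h => h ▸ .refl⟩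
  cases h.cases_head with
  | inl h => exact h.symm
  | inr h => obtain ⟨u, hwu, -⟩ := h; exact absurd hw hwu.not_isChain

variable (hf : ∀ i, f (f i) = f i)
include hf

theorem reflTransGen_pairStep_cube_iff {m : α} (hm : f m = m) {v : List α} :
    ReflTransGen (PairStep f) [m, m, m] v ↔
      (∃ j k, f j = m ∧ v = [j, k, f k]) ∨ ∃ j, v = [j, f j, m] := by
  refine reflTransGen_iff_mem_of_closed
    (S := {v | (∃ j k, f j = m ∧ v = [j, k, f k]) ∨ ∃ j, v = [j, f j, m]}) ?_
    (.inr ⟨m, by rw [hm]⟩) ?_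
  · rintro u (⟨j, k, hj, rfl⟩ | ⟨j, rfl⟩) v hv
    · rcases hv.triple_cases with ⟨hk, j', rfl⟩ | ⟨-, j', rfl⟩
      · exact .inr ⟨j', by rw [hk, hj, hm]⟩
      · exact .inl ⟨j, j', hj, rfl⟩
    · rcases hv.triple_cases with ⟨-, j', rfl⟩ | ⟨hmj, j', rfl⟩
      · exact .inr ⟨j', rfl⟩
      · exact .inl ⟨j, j', (hmj.trans (hf j)).symm, rfl⟩
  · rintro v (⟨j, k, hj, rfl⟩ | ⟨j, rfl⟩)
    · refine .head (⟨[], [m], m, j, by rw [hm]; rfl, by rw [hj]⟩ : PairStep f _ _) (.single ?_)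
      exact ⟨[j], [], m, k, by rw [hm]; rfl, rfl⟩
    · exact .single ⟨[], [m], m, j, by rw [hm]; rfl, rfl⟩

theorem reflTransGen_pairStep_iff_of_apply_ne {c : α} (hc : f c ≠ c) (a : α) {v : List α} :
    ReflTransGen (PairStep f) [a, f a, c] v ↔ ∃ j, v = [j, f j, c] := by
  refine reflTransGen_iff_mem_of_closed (S := {v | ∃ j, v = [j, f j, c]}) ?_ ⟨a, rfl⟩ ?_
  · rintro u ⟨j, rfl⟩ v hv
    rcases hv.triple_cases with ⟨-, j', rfl⟩ | ⟨hcj, -⟩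
    · exact ⟨j', rfl⟩
    · exact absurd (by rw [hcj, hf]) hc
  · rintro v ⟨j, rfl⟩
    exact .single ⟨[], [c], a, j, rfl, rfl⟩

end Triples

section Covers

variable {α : Type*} {f : α → α}

theorem pairCon_mk_pair_eq (i j : α) :
    (pairCon f).mk' (ofList [i, f i]) = (pairCon f).mk' (ofList [j, f j]) :=
  pairCon_mk_eq_iff.mpr (.single ⟨[], [], i, j, rfl, rfl⟩)

theorem eq_of_pairCon_mk_pair_eq {a b : α} (hb : b ≠ f a) {v : List α}
    (h : (pairCon f).mk' (ofList [a, b]) = (pairCon f).mk' (ofList v)) : v = [a, b] :=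
  (reflTransGen_pairStep_iff_of_isChain (by simpa using hb)).mp (pairCon_mk_eq_iff.mp h)

variable (hf : ∀ i, f (f i) = f i)
include hf

theorem setOf_covL_mk_cube {m : α} (hm : f m = m) :
    {y | covL y ((pairCon f).mk' (ofList [m, m, m]))} =
      insert ((pairCon f).mk' (ofList [m, m]))
        ((fun p : α × α => (pairCon f).mk' (ofList [p.1, p.2])) ''
          {j | f j = m} ×ˢ {k | k ≠ m}) := by
  rw [setOf_covL_mk_eq_image (List.cons_ne_nil _ _)]
  ext y
  simp only [Set.mem_image, Set.mem_ofPred_eq, reflTransGen_pairStep_cube_iff hf hm,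
    Set.mem_insert_iff, Set.mem_prod]
  constructor
  · rintro ⟨v, ⟨j, k, hj, rfl⟩ | ⟨j, rfl⟩, rfl⟩
    · by_cases hk : k = m
      · subst hk
        exact .inl (by simpa [hj, hm] using pairCon_mk_pair_eq (f := f) j k)
      · exact .inr ⟨(j, k), ⟨hj, hk⟩, rfl⟩
    · exact .inl (by simpa [hm] using pairCon_mk_pair_eq (f := f) j m)
  · rintro (rfl | ⟨⟨j, k⟩, ⟨hj, -⟩, rfl⟩)
    · exact ⟨[m, m, m], .inr ⟨m, by rw [hm]⟩, rfl⟩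
    · exact ⟨[j, k, f k], .inl ⟨j, k, hj, rfl⟩, rfl⟩

theorem card_covL_mk_cube [Finite α] {m : α} (hm : f m = m) :
    Nat.card {y // covL y ((pairCon f).mk' (ofList [m, m, m]))} =
      Nat.card {j // f j = m} * (Nat.card α - 1) + 1 := by
  have hinj : Set.InjOn (fun p : α × α => (pairCon f).mk' (ofList [p.1, p.2]))
      ({j | f j = m} ×ˢ {k | k ≠ m}) := by
    rintro ⟨a, b⟩ ⟨ha, hb⟩ ⟨a', b'⟩ - h
    have := eq_of_pairCon_mk_pair_eq (ha ▸ hb : b ≠ f a) h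
    simp_all
  have hnotMem : (pairCon f).mk' (ofList [m, m]) ∉
      (fun p : α × α => (pairCon f).mk' (ofList [p.1, p.2])) '' {j | f j = m} ×ˢ {k | k ≠ m} := by
    rintro ⟨⟨a, b⟩, ⟨ha, hb⟩, h⟩
    obtain ⟨rfl, rfl⟩ : m = a ∧ m = b := by
      simpa using eq_of_pairCon_mk_pair_eq (ha ▸ hb : b ≠ f a) h
    exact hb rfl
  rw [← Set.coe_ofPred, Nat.card_coe_set_eq, setOf_covL_mk_cube hf hm,
    Set.ncard_insert_of_notMem hnotMem, hinj.ncard_image, Set.ncard_prod,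
    ← Nat.card_coe_set_eq, Set.coe_ofPred, show {k | k ≠ m} = {m}ᶜ from rfl, Set.ncard_compl,
    Set.ncard_singleton]

theorem card_covL_mk_eq_one {w : List α} (hw : w.length = 3)
    (hcube : ∀ m, f m = m → (pairCon f).mk' (ofList w) ≠ (pairCon f).mk' (ofList [m, m, m])) :
    Nat.card {y // covL y ((pairCon f).mk' (ofList w))} = 1 := by
  obtain ⟨a, b, c, rfl⟩ := List.length_eq_three.mp hw
  rw [← Set.coe_ofPred, Nat.card_coe_set_eq, Set.ncard_eq_one,
    setOf_covL_mk_eq_image (List.cons_ne_nil _ _)]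
  by_cases hc : c = f b
  · -- `a b f(b) ~ a f(a) f(a) ~ f(a) f(a) f(a)`
    refine absurd (pairCon_mk_eq_iff.mpr ?_) (hcube (f a) (hf a))
    subst hc
    exact .head ⟨[a], [], b, f a, rfl, by rw [hf]; rfl⟩
      (.single ⟨[], [f a], a, f a, rfl, by rw [hf]; rfl⟩)
  by_cases hb : b = f a
  · subst hb
    by_cases hfc : f c = c
    · refine absurd (pairCon_mk_eq_iff.mpr (.single ?_)) (hcube c hfc)
      exact ⟨[], [c], a, c, rfl, by rw [hfc]; rfl⟩
    refine ⟨(pairCon f).mk' (ofList [a, f a]), ?_⟩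
    ext y
    simp only [Set.mem_image, Set.mem_ofPred_eq, reflTransGen_pairStep_iff_of_apply_ne hf hfc,
      Set.mem_singleton_iff]
    constructor
    · rintro ⟨_, ⟨j, rfl⟩, rfl⟩
      exact pairCon_mk_pair_eq j a
    · rintro rfl
      exact ⟨_, ⟨a, rfl⟩, rfl⟩
  · refine ⟨(pairCon f).mk' (ofList [a, b]), ?_⟩
    simp [reflTransGen_pairStep_iff_of_isChain (f := f) (w := [a, b, c]) (by simp [hb, hc])]

end Covers

theorem List.sum_take_mono (lam : List ℕ) : Monotone fun t => (lam.take t).sum :=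
  fun _ _ h => (List.take_prefix_take_left h).sublist.sum_le_sum fun _ _ => Nat.zero_le _

theorem List.sum_take_lt_sum_take_succ {lam : List ℕ} (hpos : ∀ a ∈ lam, 0 < a) {t : ℕ}
    (ht : t < lam.length) : (lam.take t).sum < (lam.take (t + 1)).sum := by
  rw [List.sum_take_succ _ _ ht]
  exact Nat.lt_add_of_pos_right (hpos _ (List.getElem_mem ht))

theorem List.exists_sum_take_le_lt_sum_take_succ {lam : List ℕ} {i : ℕ} (hi : i < lam.sum) :
    ∃ t < lam.length, (lam.take t).sum ≤ i ∧ i < (lam.take (t + 1)).sum := by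
  induction lam generalizing i with
  | nil => simp at hi
  | cons a l ih =>
    by_cases hia : i < a
    · exact ⟨0, by simp, by simp, by simpa using hia⟩
    · obtain ⟨t, ht, h₁, h₂⟩ := ih (i := i - a) (by simp at hi; omega)
      exact ⟨t + 1, by simpa using ht, by simp; omega, by simp; omega⟩

theorem List.eq_of_sum_take_le_lt_sum_take_succ {lam : List ℕ} {t s i : ℕ}
    (ht : (lam.take t).sum ≤ i ∧ i < (lam.take (t + 1)).sum)
    (hs : (lam.take s).sum ≤ i ∧ i < (lam.take (s + 1)).sum) : t = s := by
  by_contra hne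
  rcases Nat.lt_or_gt_of_ne hne with h | h
  · have : (lam.take (t + 1)).sum ≤ (lam.take s).sum := lam.sum_take_mono h
    omega
  · have : (lam.take (s + 1)).sum ≤ (lam.take t).sum := lam.sum_take_mono h
    omega

theorem Fin.card_subtype_le_and_lt {n a b : ℕ} (hb : b ≤ n) :
    Nat.card {j : Fin n // a ≤ (j : ℕ) ∧ (j : ℕ) < b} = b - a := by
  rw [← Nat.card_Ico, ← Nat.card_eq_finsetCard]
  exact Nat.card_congr
    { toFun j := ⟨j.1, Finset.mem_Ico.mpr j.2⟩
      invFun x := ⟨⟨x, (Finset.mem_Ico.mp x.2).2.trans_le hb⟩, Finset.mem_Ico.mp x.2⟩ }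

/-- `f = f_λ`, on `Fin n` (indices shifted down by one): each block
`[λ_1 + ⋯ + λ_t, λ_1 + ⋯ + λ_{t+1})` is mapped to its last element. -/
def IsBlockMap {n : ℕ} (lam : List ℕ) (f : Fin n → Fin n) : Prop :=
  ∀ t < lam.length, ∀ i : Fin n, (lam.take t).sum ≤ i → (i : ℕ) < (lam.take (t + 1)).sum →
    (f i : ℕ) = (lam.take (t + 1)).sum - 1

namespace IsBlockMap

variable {n : ℕ} {lam : List ℕ} {f : Fin n → Fin n} (hf : IsBlockMap lam f)
include hf

theorem apply_eq_self (hpos : ∀ a ∈ lam, 0 < a) {t : ℕ} (ht : t < lam.length) {m : Fin n}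
    (hm : (m : ℕ) = (lam.take (t + 1)).sum - 1) : f m = m := by
  have := List.sum_take_lt_sum_take_succ hpos ht
  exact Fin.ext ((hf t ht m (by omega) (by omega)).trans hm.symm)

theorem exists_apply_eq (hsum : lam.sum = n) (i : Fin n) :
    ∃ t < lam.length, (f i : ℕ) = (lam.take (t + 1)).sum - 1 := by
  obtain ⟨t, ht, h₁, h₂⟩ := List.exists_sum_take_le_lt_sum_take_succ (by rw [hsum]; exact i.isLt)
  exact ⟨t, ht, hf t ht i h₁ h₂⟩

theorem apply_apply (hpos : ∀ a ∈ lam, 0 < a) (hsum : lam.sum = n) (i : Fin n) :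
    f (f i) = f i := by
  obtain ⟨t, ht, hi⟩ := hf.exists_apply_eq hsum i
  exact hf.apply_eq_self hpos ht hi

theorem apply_eq_iff (hpos : ∀ a ∈ lam, 0 < a) (hsum : lam.sum = n) {t : ℕ}
    (ht : t < lam.length) {m : Fin n} (hm : (m : ℕ) = (lam.take (t + 1)).sum - 1) (j : Fin n) :
    f j = m ↔ (lam.take t).sum ≤ j ∧ (j : ℕ) < (lam.take (t + 1)).sum := by
  refine ⟨fun hj => ?_, fun hj => Fin.ext ((hf t ht j hj.1 hj.2).trans hm.symm)⟩
  obtain ⟨s, hs, h₁, h₂⟩ := List.exists_sum_take_le_lt_sum_take_succ (by rw [hsum]; exact j.isLt)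
  have hmt := List.sum_take_lt_sum_take_succ hpos ht
  have hms : (m : ℕ) = (lam.take (s + 1)).sum - 1 := by rw [← hj, hf s hs j h₁ h₂]
  have hms' := List.sum_take_lt_sum_take_succ hpos hs
  obtain rfl : s = t := List.eq_of_sum_take_le_lt_sum_take_succ (lam := lam) (i := m)
    ⟨by omega, by omega⟩ ⟨by omega, by omega⟩
  exact ⟨h₁, h₂⟩

theorem card_fiber (hpos : ∀ a ∈ lam, 0 < a) (hsum : lam.sum = n) {t : ℕ}
    (ht : t < lam.length) {m : Fin n} (hm : (m : ℕ) = (lam.take (t + 1)).sum - 1) :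
    Nat.card {j // f j = m} = lam.get ⟨t, ht⟩ := by
  have hle : (lam.take (t + 1)).sum ≤ n :=
    hsum ▸ (lam.take_prefix _).sublist.sum_le_sum fun _ _ => Nat.zero_le _
  rw [Nat.card_congr (Equiv.subtypeEquivRight (hf.apply_eq_iff hpos hsum ht hm)),
    Fin.card_subtype_le_and_lt hle, List.sum_take_succ _ _ ht]
  simp

end IsBlockMap

theorem stmt17_general (n : ℕ) (lam : List ℕ)
    (hpos : ∀ a ∈ lam, 0 < a) (hsum : lam.sum = n)
    (f : Fin n → Fin n)
    (hf : ∀ (t : ℕ), t < lam.length → ∀ i : Fin n,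
      (lam.take t).sum ≤ (i : ℕ) → (i : ℕ) < (lam.take (t + 1)).sum →
      ((f i : ℕ) = (lam.take (t + 1)).sum - 1))
    (c : Con (FreeMonoid (Fin n)))
    (hc : c = conGen fun u v => ∃ i j : Fin n,
      u = FreeMonoid.of i * FreeMonoid.of (f i) ∧
      v = FreeMonoid.of j * FreeMonoid.of (f j)) :
    -- the distinguished rank-3 elements and their lower cover counts
    (∀ (t : ℕ) (ht : t < lam.length) (m : Fin n), (m : ℕ) = (lam.take (t + 1)).sum - 1 →
      (∃ w : List (Fin n), c.mk' (FreeMonoid.ofList w) = c.mk' (FreeMonoid.ofList [m, m, m])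
          ∧ w.length = 3) ∧
      Nat.card {y : c.Quotient // covL y (c.mk' (FreeMonoid.ofList [m, m, m]))}
        = lam.get ⟨t, ht⟩ * (n - 1) + 1) ∧
    -- every other rank-3 element covers exactly one rank-2 element
    (∀ z : c.Quotient,
      (∃ w : List (Fin n), c.mk' (FreeMonoid.ofList w) = z ∧ w.length = 3) →
      (∀ (t : ℕ), t < lam.length → ∀ m : Fin n, (m : ℕ) = (lam.take (t + 1)).sum - 1 →
        z ≠ c.mk' (FreeMonoid.ofList [m, m, m])) →
      Nat.card {y : c.Quotient // covL y z} = 1) := by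
  replace hf : IsBlockMap lam f := hf
  have hidem := hf.apply_apply hpos hsum
  rw [conGen_eq_pairCon] at hc
  subst hc
  refine ⟨fun t ht m hm => ⟨⟨[m, m, m], rfl, rfl⟩, ?_⟩, ?_⟩
  · rw [card_covL_mk_cube hidem (hf.apply_eq_self hpos ht hm), hf.card_fiber hpos hsum ht hm,
      Nat.card_fin]
  · rintro z ⟨w, rfl, hw⟩ hne
    refine card_covL_mk_eq_one hidem hw fun m hm => ?_
    obtain ⟨t, ht, hmt⟩ := hf.exists_apply_eq hsum m
    exact hne t ht m (hm ▸ hmt)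

/-- In `(M(f_λ), ≤_L)` for the idempotent function `f_λ` associated to a partition
`λ ⊢ n`, the rank-3 element `s_m³` where `m = λ_1 + ⋯ + λ_t` covers exactly
`λ_t(n-1) + 1` rank-2 elements, and every other rank-3 element covers exactly one
rank-2 element. -/
theorem stmt17 (n : ℕ) (hn : 2 ≤ n) (lam : List ℕ)
    (hpos : ∀ a ∈ lam, 0 < a) (hsum : lam.sum = n) (hsort : lam.Pairwise (· ≥ ·))
    (f : Fin n → Fin n)
    (hf : ∀ (t : ℕ), t < lam.length → ∀ i : Fin n,
      (lam.take t).sum ≤ (i : ℕ) → (i : ℕ) < (lam.take (t + 1)).sum →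
      ((f i : ℕ) = (lam.take (t + 1)).sum - 1))
    (c : Con (FreeMonoid (Fin n)))
    (hc : c = conGen fun u v => ∃ i j : Fin n,
      u = FreeMonoid.of i * FreeMonoid.of (f i) ∧
      v = FreeMonoid.of j * FreeMonoid.of (f j)) :
    -- the distinguished rank-3 elements and their lower cover counts
    (∀ (t : ℕ) (ht : t < lam.length) (m : Fin n), (m : ℕ) = (lam.take (t + 1)).sum - 1 →
      (∃ w : List (Fin n), c.mk' (FreeMonoid.ofList w) = c.mk' (FreeMonoid.ofList [m, m, m])
          ∧ w.length = 3) ∧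
      Nat.card {y : c.Quotient // covL y (c.mk' (FreeMonoid.ofList [m, m, m]))}
        = lam.get ⟨t, ht⟩ * (n - 1) + 1) ∧
    -- every other rank-3 element covers exactly one rank-2 element
    (∀ z : c.Quotient,
      (∃ w : List (Fin n), c.mk' (FreeMonoid.ofList w) = z ∧ w.length = 3) →
      (∀ (t : ℕ), t < lam.length → ∀ m : Fin n, (m : ℕ) = (lam.take (t + 1)).sum - 1 →
        z ≠ c.mk' (FreeMonoid.ofList [m, m, m])) →
      Nat.card {y : c.Quotient // covL y z} = 1) :=
  stmt17_general n lam hpos hsum f hf c hc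
end

section
/- Let λ and ν be two distinct partitions of n ≥ 2, and let f_λ, f_ν : [n] → [n] be the associated idempotent functions (fibers are consecutive blocks of sizes given by the parts, each sent to its largest element). Then the posets (M(f_λ), ≤_L) and (M(f_ν), ≤_L) are not isomorphic. -/
/-!
Left divisibility turns `M(f)` into a graded poset whose rank function is word length. For
idempotent `f`, words of length at most three have explicit normal forms, from which the lower
covers of every rank-3 element can be read off: the cube `s_m s_m s_m` of a fixed point `m` of `f`
has `|f⁻¹(m)|(n-1)+1` lower covers, any other rank-3 element at most one. Hence, for `v ≥ 1`, the
number of rank-3 elements with `v(n-1)+1` lower covers, an invariant of the poset, is the number of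
parts of `λ` equal to `v`, and a partition is determined by these multiplicities.
-/

open Finset

noncomputable def heightCoverCount (α : Type*) [Preorder α] (r c : ℕ) : ℕ :=
  {q : α | Order.height q = r ∧ {a | a ⋖ q}.ncard = c}.ncard

theorem OrderIso.heightCoverCount_eq {α β : Type*} [Preorder α] [Preorder β] (e : α ≃o β)
    (r c : ℕ) : heightCoverCount α r c = heightCoverCount β r c := by
  have hcovers (q : α) : {b | b ⋖ e q} = e '' {a | a ⋖ q} := by
    ext b
    obtain ⟨a, rfl⟩ := e.surjective b
    simp [apply_covBy_apply_iff]
  have hset : {q : β | Order.height q = r ∧ {a | a ⋖ q}.ncard = c} =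
      e '' {q : α | Order.height q = r ∧ {a | a ⋖ q}.ncard = c} := by
    ext b
    obtain ⟨q, rfl⟩ := e.surjective b
    simp [Order.height_orderIso, hcovers, Set.ncard_image_of_injective _ e.injective]
  rw [heightCoverCount, heightCoverCount, hset, Set.ncard_image_of_injective _ e.injective]

def pairRel {α : Type*} (f : α → α) (u v : FreeMonoid α) : Prop :=
  ∃ i j : α, u = .of i * .of (f i) ∧ v = .of j * .of (f j)

/-- `M(f) = ⟨s_i | s_i s_{f i} = s_j s_{f j}⟩`, where `s_i` is `mk f [i]`. -/
def FunMonoid {α : Type*} (f : α → α) : Type _ := (conGen (pairRel f)).Quotient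

namespace FunMonoid

variable {α : Type*} (f : α → α)

instance : Monoid (FunMonoid f) := inferInstanceAs (Monoid (conGen (pairRel f)).Quotient)

instance : Preorder (FunMonoid f) where
  le := leL
  le_refl a := ⟨1, (mul_one a).symm⟩
  le_trans _ _ _ := fun ⟨x, hx⟩ ⟨y, hy⟩ => ⟨x * y, by rw [hy, hx, mul_assoc]⟩

def mk (l : List α) : FunMonoid f :=
  ((FreeMonoid.ofList l : FreeMonoid α) : (conGen (pairRel f)).Quotient)

variable {f}

theorem mk_append (u v : List α) : mk f (u ++ v) = mk f u * mk f v := by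
  rw [mk, FreeMonoid.ofList_append, Con.coe_mul]; rfl

theorem mk_surjective : Function.Surjective (mk f) := fun q =>
  (Con.mk'_surjective q).imp fun w hw => by rw [← hw]; rfl

theorem mk_eq_mk {u v : List α} :
    mk f u = mk f v ↔ conGen (pairRel f) (.ofList u) (.ofList v) :=
  Con.eq _

theorem mk_pair_eq_mk_pair {a b c d : α} (hb : b = f a) (hd : d = f c) :
    mk f [a, b] = mk f [c, d] := by
  subst hb hd
  exact mk_eq_mk.2 <| ConGen.Rel.of _ _ ⟨a, c, rfl, rfl⟩

theorem length_eq_of_conGen {x y : FreeMonoid α} (h : conGen (pairRel f) x y) :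
    x.length = y.length := by
  induction h with
  | of _ _ h => obtain ⟨i, j, rfl, rfl⟩ := h; rfl
  | refl => rfl
  | symm _ ih => exact ih.symm
  | trans _ _ ih₁ ih₂ => exact ih₁.trans ih₂
  | mul _ _ ih₁ ih₂ => simp only [FreeMonoid.length_mul, ih₁, ih₂]

def deg (q : FunMonoid f) : ℕ :=
  Con.liftOn (c := conGen (pairRel f)) q FreeMonoid.length fun _ _ => length_eq_of_conGen

@[simp]
theorem deg_mk (l : List α) : deg (mk f l) = l.length := rfl

theorem length_eq_of_mk_eq {u v : List α} (h : mk f u = mk f v) : u.length = v.length := by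
  simpa using congrArg deg h

theorem mk_le_iff {u : List α} {q : FunMonoid f} : mk f u ≤ q ↔ ∃ v, q = mk f (u ++ v) := by
  obtain ⟨w, rfl⟩ := mk_surjective q
  constructor
  · rintro ⟨c, hc⟩
    obtain ⟨v, rfl⟩ := mk_surjective c
    exact ⟨v, hc.trans (mk_append u v).symm⟩
  · rintro ⟨v, hv⟩
    exact ⟨mk f v, hv.trans (mk_append u v)⟩

theorem mk_le_mk_append (u v : List α) : mk f u ≤ mk f (u ++ v) := mk_le_iff.2 ⟨v, rfl⟩

theorem deg_le_deg {a b : FunMonoid f} (h : a ≤ b) : deg a ≤ deg b := by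
  obtain ⟨u, rfl⟩ := mk_surjective a
  obtain ⟨v, rfl⟩ := mk_le_iff.1 h
  simp

theorem mk_lt_mk_append (u : List α) {v : List α} (hv : v ≠ []) : mk f u < mk f (u ++ v) :=
  lt_of_le_not_ge (mk_le_mk_append u v) fun h => by
    have := deg_le_deg h
    simp only [deg_mk, List.length_append] at this
    exact hv (List.eq_nil_of_length_eq_zero (by omega))

theorem deg_strictMono : StrictMono (deg (f := f)) := by
  intro a b hab
  obtain ⟨u, rfl⟩ := mk_surjective a
  obtain ⟨v, rfl⟩ := mk_le_iff.1 hab.le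
  rcases v with _ | ⟨x, v⟩
  · rw [List.append_nil] at hab; exact absurd hab (lt_irrefl _)
  · simp

theorem covBy_iff {a b : FunMonoid f} : a ⋖ b ↔ a ≤ b ∧ deg a + 1 = deg b := by
  constructor
  · intro h
    refine ⟨h.le, le_antisymm (deg_strictMono h.lt) ?_⟩
    obtain ⟨u, rfl⟩ := mk_surjective a
    obtain ⟨v, rfl⟩ := mk_le_iff.1 h.le
    match v, h with
    | [], h => simp at h
    | [_], _ => simp
    | x :: y :: v, h =>
      refine absurd (h.2 (mk_lt_mk_append u (List.cons_ne_nil x []))) fun h' => h' ?_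
      simpa using mk_lt_mk_append (u ++ [x]) (List.cons_ne_nil y v)
  · rintro ⟨hab, hdeg⟩
    have hlt : a < b := lt_of_le_not_ge hab fun hba => by have := deg_le_deg hba; omega
    exact ⟨hlt, fun c hac hcb => by have := deg_strictMono hac; have := deg_strictMono hcb; omega⟩

theorem height_eq_deg (q : FunMonoid f) : Order.height q = deg q := by
  refine le_antisymm ?_ ?_
  · simpa using Order.height_le_height_apply_of_strictMono _ deg_strictMono q
  · obtain ⟨l, rfl⟩ := mk_surjective q
    induction l using List.reverseRecOn with
    | nil => simp
    | append_singleton l x ih =>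
      calc ((deg (mk f (l ++ [x])) : ℕ) : ℕ∞) = deg (mk f l) + 1 := by simp
        _ ≤ Order.height (mk f l) + 1 := by gcongr
        _ ≤ _ := Order.height_add_one_le (mk_lt_mk_append l (List.cons_ne_nil x []))

section NormalForm

variable [DecidableEq α] (z : α)

variable (f) in
/-- Normal forms of the words of length at most three; `[z, f z]` stands for the common value of
all `s_i s_{f i}`. -/
def nf : List α → List α
  | [a, b] => if b = f a then [z, f z] else [a, b]
  | [a, b, c] =>
      if c = f b then [f a, f a, f a]
      else if b = f a then (if f c = c then [c, c, c] else [z, f z, c])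
      else [a, b, c]
  | l => l

theorem nf_cube {m : α} (hm : f m = m) : nf f z [m, m, m] = [m, m, m] := by
  simp [nf, hm]

variable (hf : ∀ i, f (f i) = f i)
include hf

theorem nf_nf (l : List α) : nf f z (nf f z l) = nf f z l := by
  match l with
  | [a, b] => simp only [nf]; split_ifs <;> simp_all
  | [a, b, c] => simp only [nf]; split_ifs <;> grind
  | [] | [_] | _ :: _ :: _ :: _ :: _ => rfl

theorem nf_append {u v : List α} (h : u.length + v.length ≤ 3) :
    nf f z (u ++ v) = nf f z (nf f z u ++ nf f z v) := by
  match u, v with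
  | [], v => exact (nf_nf z hf v).symm
  | u, [] => rw [List.append_nil, show nf f z [] = [] from rfl, List.append_nil, nf_nf z hf]
  | [a], [b] => rfl
  | [a], [b, c] => simp only [nf, List.cons_append, List.nil_append]; split_ifs <;> grind
  | [a, b], [c] => simp only [nf, List.cons_append, List.nil_append]; split_ifs <;> grind
  | [_], _ :: _ :: _ :: _ | _ :: _ :: _, _ :: _ :: _ | _ :: _ :: _ :: _, _ :: _ =>
    simp only [List.length_cons] at h; omega

theorem nf_eq_of_conGen {x y : FreeMonoid α} (h : conGen (pairRel f) x y) (hx : x.length ≤ 3) :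
    nf f z x.toList = nf f z y.toList := by
  induction h with
  | of _ _ h => obtain ⟨i, j, rfl, rfl⟩ := h; simp [nf]
  | refl => rfl
  | symm h ih => exact (ih (length_eq_of_conGen h ▸ hx)).symm
  | trans h₁ _ ih₁ ih₂ => exact (ih₁ hx).trans (ih₂ (length_eq_of_conGen h₁ ▸ hx))
  | mul h₁ h₂ ih₁ ih₂ =>
    simp only [FreeMonoid.length_mul] at hx
    rw [FreeMonoid.toList_mul, FreeMonoid.toList_mul, nf_append z hf hx, ih₁ (by omega),
      ih₂ (by omega), ← nf_append z hf]
    have := length_eq_of_conGen h₁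
    have := length_eq_of_conGen h₂
    unfold FreeMonoid.length at *
    omega

theorem mk_nf {l : List α} (hl : l.length ≤ 3) : mk f (nf f z l) = mk f l := by
  have triple (a b c : α) : mk f [a, b, c] = mk f [a, b] * mk f [c] := mk_append [a, b] [c]
  have triple' (a b c : α) : mk f [a, b, c] = mk f [a] * mk f [b, c] := mk_append [a] [b, c]
  match l with
  | [a, b] =>
    simp only [nf]; split_ifs with h
    · exact mk_pair_eq_mk_pair rfl h
    · rfl
  | [a, b, c] =>
    simp only [nf]; split_ifs with h₁ h₂ h₃
    · calc mk f [f a, f a, f a] = mk f [f a, f a] * mk f [f a] := triple ..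
        _ = mk f [a, f a] * mk f [f a] := by rw [mk_pair_eq_mk_pair (hf a).symm rfl]
        _ = mk f [a] * mk f [f a, f a] := by rw [← triple, triple']
        _ = mk f [a] * mk f [b, c] := by rw [mk_pair_eq_mk_pair (hf a).symm h₁]
        _ = mk f [a, b, c] := (triple' ..).symm
    · rw [triple, triple, mk_pair_eq_mk_pair h₃.symm h₂]
    · rw [triple, triple, mk_pair_eq_mk_pair rfl h₂]
    · rfl
  | [] | [_] => rfl
  | _ :: _ :: _ :: _ :: _ => simp only [List.length_cons] at hl; omega

theorem mk_eq_mk_iff {u v : List α} (hu : u.length ≤ 3) :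
    mk f u = mk f v ↔ u.length = v.length ∧ nf f z u = nf f z v := by
  refine ⟨fun h => ⟨length_eq_of_mk_eq h, nf_eq_of_conGen z hf (mk_eq_mk.1 h) hu⟩,
    fun ⟨hl, h⟩ => ?_⟩
  rw [← mk_nf z hf hu, ← mk_nf z hf (l := v) (hl ▸ hu), h]

theorem injOn_mk {T : Set (List α)} (hT : ∀ l ∈ T, l.length ≤ 3 ∧ nf f z l = l) :
    Set.InjOn (mk f) T := fun u hu v hv h => by
  rw [← (hT u hu).2, ← (hT v hv).2]
  exact ((mk_eq_mk_iff z hf (hT u hu).1).1 h).2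

theorem covBy_mk_iff {w : List α} (hw : w.length = 3) {a : FunMonoid f} :
    a ⋖ mk f w ↔ ∃ x y c, a = mk f [x, y] ∧ nf f z [x, y, c] = nf f z w := by
  rw [covBy_iff]
  constructor
  · rintro ⟨hle, hdeg⟩
    obtain ⟨u, rfl⟩ := mk_surjective a
    obtain ⟨v, hv⟩ := mk_le_iff.1 hle
    have hlen := length_eq_of_mk_eq hv
    simp only [deg_mk, List.length_append] at hdeg hlen
    match u, v with
    | [x, y], [c] => exact ⟨x, y, c, rfl, ((mk_eq_mk_iff z hf hw.le).1 hv).2.symm⟩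
    | [], _ | [_], _ | _ :: _ :: _ :: _, _ | [_, _], [] | [_, _], _ :: _ :: _ =>
      simp only [List.length_cons, List.length_nil] at hdeg hlen; omega
  · rintro ⟨x, y, c, rfl, h⟩
    refine ⟨mk_le_iff.2 ⟨[c], ((mk_eq_mk_iff z hf hw.le).2 ⟨by simp [hw], h.symm⟩)⟩, by simp [hw]⟩

theorem mk_pair_eq_mk_take_nf {x y c : α} (h : ∀ m, f m = m → nf f z [x, y, c] ≠ [m, m, m]) :
    mk f [x, y] = mk f ((nf f z [x, y, c]).take 2) := by
  simp only [nf] at h ⊢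
  split_ifs at h ⊢ with h₁ h₂ h₃
  · exact absurd rfl (h (f x) (hf x))
  · exact absurd rfl (h c h₃)
  · exact mk_pair_eq_mk_pair h₂ rfl
  · rfl

theorem ncard_covBy_le_one {w : List α} (hw : w.length = 3)
    (h : ∀ m, f m = m → nf f z w ≠ [m, m, m]) : {a | a ⋖ mk f w}.ncard ≤ 1 := by
  refine (Set.ncard_le_ncard (t := {mk f ((nf f z w).take 2)}) ?_).trans_eq
    (Set.ncard_singleton _)
  intro a ha
  obtain ⟨x, y, c, rfl, hxyc⟩ := (covBy_mk_iff z hf hw).1 ha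
  rw [Set.mem_singleton_iff, ← hxyc]
  exact mk_pair_eq_mk_take_nf z hf (hxyc ▸ h)

end NormalForm

theorem ncard_covBy_mk_cube [Fintype α] [DecidableEq α] (hf : ∀ i, f (f i) = f i) {m : α}
    (hm : f m = m) :
    {a | a ⋖ mk f [m, m, m]}.ncard = #{i | f i = m} * (Fintype.card α - 1) + 1 := by
  -- apart from `s_m s_m`, the lower covers are the `s_x s_y` with `f x = m ≠ y`,
  -- since `s_x s_y s_{f y} = s_m³`
  let T : Finset (List α) :=
    insert [m, m] ((univ.filter (f · = m) ×ˢ univ.erase m).image fun p => [p.1, p.2])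
  have hT : {a | a ⋖ mk f [m, m, m]} = mk f '' T := by
    ext a
    rw [Set.mem_ofPred_eq, covBy_mk_iff m hf rfl, nf_cube m hm]
    simp only [T, coe_insert, coe_image, Set.image_insert_eq, Set.mem_insert_iff, Set.mem_image,
      Set.image_image]
    constructor
    · rintro ⟨x, y, c, rfl, h⟩
      by_cases hy : y = f x
      · exact Or.inl (mk_pair_eq_mk_pair hy hm.symm)
      have hx : f x = m := by
        simp only [nf] at h
        split_ifs at h <;> simp_all
      refine Or.inr ⟨(x, y), by simpa [hx] using hx ▸ hy, rfl⟩
    · rintro (rfl | ⟨⟨x, y⟩, hxy, rfl⟩)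
      · exact ⟨m, m, m, rfl, nf_cube m hm⟩
      · simp only [coe_product, coe_filter, Set.mem_prod] at hxy
        exact ⟨x, y, f y, rfl, by simp_all [nf]⟩
  have hpair : Function.Injective fun p : α × α => [p.1, p.2] := fun p q h => by
    simp_all [Prod.ext_iff]
  have hmm : [m, m] ∉ (univ.filter (f · = m) ×ˢ univ.erase m).image fun p => [p.1, p.2] := by
    simp
  rw [hT, Set.InjOn.ncard_image (injOn_mk m hf ?_), Set.ncard_coe_finset,
    card_insert_of_notMem hmm, card_image_of_injective _ hpair, card_product,
    card_erase_of_mem (mem_univ m), card_univ]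
  simp only [T, coe_insert, coe_image, Set.mem_insert_iff, Set.mem_image]
  rintro l (rfl | ⟨⟨x, y⟩, hxy, rfl⟩)
  · simp [nf, hm]
  · simp_all [nf]

theorem heightCoverCount_eq_card [Fintype α] [DecidableEq α] (hf : ∀ i, f (f i) = f i)
    (hα : 2 ≤ Fintype.card α) {v : ℕ} (hv : 0 < v) :
    heightCoverCount (FunMonoid f) 3 (v * (Fintype.card α - 1) + 1) =
      #{m | f m = m ∧ #{i | f i = m} = v} := by
  have hcube : Set.InjOn (fun m => mk f [m, m, m]) {m | f m = m} := fun m hm m' hm' h => by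
    have := ((mk_eq_mk_iff m hf le_rfl).1 h).2
    rw [nf_cube m hm, nf_cube m hm'] at this
    simpa using this
  have hset : {q : FunMonoid f | Order.height q = (3 : ℕ) ∧
      {a | a ⋖ q}.ncard = v * (Fintype.card α - 1) + 1} =
      (fun m => mk f [m, m, m]) '' ↑({m | f m = m ∧ #{i | f i = m} = v} : Finset α) := by
    ext q
    simp only [Set.mem_ofPred_eq, Set.mem_image, mem_coe, mem_filter, mem_univ, true_and]
    constructor
    · rintro ⟨hw, hc⟩
      obtain ⟨w, rfl⟩ := mk_surjective q
      rw [height_eq_deg, deg_mk] at hw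
      have hw : w.length = 3 := by exact_mod_cast hw
      obtain ⟨z, -⟩ := List.exists_mem_of_length_pos (by omega : 0 < w.length)
      by_cases h : ∃ m, f m = m ∧ nf f z w = [m, m, m]
      · obtain ⟨m, hm, hwm⟩ := h
        have heq : mk f w = mk f [m, m, m] :=
          (mk_eq_mk_iff z hf hw.le).2 ⟨by simp [hw], by rw [hwm, nf_cube z hm]⟩
        rw [heq, ncard_covBy_mk_cube hf hm] at hc
        refine ⟨m, ⟨hm, ?_⟩, heq.symm⟩
        exact Nat.eq_of_mul_eq_mul_right (m := Fintype.card α - 1) (by omega) (by omega)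
      · push Not at h
        have := ncard_covBy_le_one z hf hw h
        have : 0 < v * (Fintype.card α - 1) := Nat.mul_pos hv (by omega)
        omega
    · rintro ⟨m, ⟨hm, hk⟩, rfl⟩
      exact ⟨by simp [height_eq_deg], by rw [ncard_covBy_mk_cube hf hm, hk]⟩
  rw [heightCoverCount, hset, Set.InjOn.ncard_image (hcube.mono fun m hm => by simp_all),
    Set.ncard_coe_finset]

end FunMonoid

theorem Finset.card_filter_fixed_card_fiber_eq {α β : Type*} [Fintype α] [Fintype β]
    [DecidableEq α] [DecidableEq β] {p : α → β} {s : β → α} (hps : Function.LeftInverse p s)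
    (v : ℕ) :
    #{m | s (p m) = m ∧ #{i | s (p i) = m} = v} = #{t | #{i | p i = t} = v} := by
  have hs : Function.Injective s := Function.LeftInverse.injective hps
  rw [← card_image_of_injective _ hs]
  congr 1
  ext m
  simp only [mem_filter, mem_univ, true_and, mem_image]
  constructor
  · rintro ⟨hm, hv⟩
    refine ⟨p m, ?_, hm⟩
    rw [← hv]
    congr 1
    ext i
    simp only [mem_filter, mem_univ, true_and]
    conv_rhs => rw [← hm]
    exact hs.eq_iff.symm
  · rintro ⟨t, ht, rfl⟩
    simpa [hps t, hs.eq_iff] using ht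

namespace Composition

variable {n : ℕ} (c : Composition n)

def lastOfBlock (t : Fin c.length) : Fin n :=
  c.embedding t ⟨c.blocksFun t - 1, Nat.sub_lt (c.one_le_blocksFun t) one_pos⟩

@[simp]
theorem index_lastOfBlock (t : Fin c.length) : c.index (c.lastOfBlock t) = t :=
  c.index_embedding t _

theorem coe_lastOfBlock (t : Fin c.length) :
    (c.lastOfBlock t : ℕ) = c.sizeUpTo (t + 1) - 1 := by
  have := c.one_le_blocksFun t
  rw [lastOfBlock, coe_embedding, c.sizeUpTo_succ' t]
  simp only
  omega

theorem card_index_eq (t : Fin c.length) : #{j | c.index j = t} = c.blocksFun t := by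
  rw [← Fintype.card_fin (c.blocksFun t), ← card_univ, ← card_map (c.embedding t).toEmbedding]
  congr 1
  ext j
  simpa [eq_comm] using c.mem_range_embedding_iff'.symm

theorem card_blocksFun_eq (v : ℕ) : #{t | c.blocksFun t = v} = c.blocks.count v :=
  Fin.card_filter_univ_eq_vector_get_eq_count v ⟨c.blocks, rfl⟩

theorem eq_lastOfBlock_index {f : Fin n → Fin n}
    (hf : ∀ t, t < c.length → ∀ i : Fin n, c.sizeUpTo t ≤ i → (i : ℕ) < c.sizeUpTo (t + 1) →
      (f i : ℕ) = c.sizeUpTo (t + 1) - 1) (j : Fin n) :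
    f j = c.lastOfBlock (c.index j) :=
  Fin.ext <| (hf _ (c.index j).2 j (c.sizeUpTo_index_le j) (c.lt_sizeUpTo_index_succ j)).trans
    (c.coe_lastOfBlock _).symm

theorem card_fixed_card_fiber_eq_count {f : Fin n → Fin n}
    (hf : ∀ j, f j = c.lastOfBlock (c.index j)) (v : ℕ) :
    #{m | f m = m ∧ #{i | f i = m} = v} = c.blocks.count v := by
  simp_rw [hf, card_filter_fixed_card_fiber_eq c.index_lastOfBlock v,
    card_index_eq, card_blocksFun_eq]

theorem idempotent_of_eq_lastOfBlock_index {f : Fin n → Fin n}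
    (hf : ∀ j, f j = c.lastOfBlock (c.index j)) (i : Fin n) : f (f i) = f i := by
  simp [hf]

theorem count_eq_heightCoverCount (hn : 2 ≤ n) {f : Fin n → Fin n}
    (hf : ∀ j, f j = c.lastOfBlock (c.index j)) {v : ℕ} (hv : 0 < v) :
    c.blocks.count v = heightCoverCount (FunMonoid f) 3 (v * (n - 1) + 1) := by
  have := FunMonoid.heightCoverCount_eq_card (c.idempotent_of_eq_lastOfBlock_index hf)
    (by simpa using hn) hv
  rw [Fintype.card_fin] at this
  rw [this, c.card_fixed_card_fiber_eq_count hf v]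

end Composition

/-- For two distinct partitions `λ, ν ⊢ n`, the posets `(M(f_λ), ≤_L)` and
`(M(f_ν), ≤_L)` are not isomorphic. -/
theorem stmt18 (n : ℕ) (hn : 2 ≤ n) (lam nu : List ℕ) (hne : lam ≠ nu)
    (hposl : ∀ a ∈ lam, 0 < a) (hsuml : lam.sum = n) (hsortl : lam.Pairwise (· ≥ ·))
    (hposn : ∀ a ∈ nu, 0 < a) (hsumn : nu.sum = n) (hsortn : nu.Pairwise (· ≥ ·))
    (flam fnu : Fin n → Fin n)
    (hflam : ∀ (t : ℕ), t < lam.length → ∀ i : Fin n,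
      (lam.take t).sum ≤ (i : ℕ) → (i : ℕ) < (lam.take (t + 1)).sum →
      ((flam i : ℕ) = (lam.take (t + 1)).sum - 1))
    (hfnu : ∀ (t : ℕ), t < nu.length → ∀ i : Fin n,
      (nu.take t).sum ≤ (i : ℕ) → (i : ℕ) < (nu.take (t + 1)).sum →
      ((fnu i : ℕ) = (nu.take (t + 1)).sum - 1))
    (cl cn : Con (FreeMonoid (Fin n)))
    (hcl : cl = conGen fun u v => ∃ i j : Fin n,
      u = FreeMonoid.of i * FreeMonoid.of (flam i) ∧
      v = FreeMonoid.of j * FreeMonoid.of (flam j))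
    (hcn : cn = conGen fun u v => ∃ i j : Fin n,
      u = FreeMonoid.of i * FreeMonoid.of (fnu i) ∧
      v = FreeMonoid.of j * FreeMonoid.of (fnu j)) :
    ¬ ∃ g : cl.Quotient ≃ cn.Quotient, ∀ a b : cl.Quotient,
      leL a b ↔ leL (g a) (g b) := by
  rintro ⟨g, hg⟩
  subst hcl hcn
  let e : FunMonoid flam ≃o FunMonoid fnu := ⟨g, (hg _ _).symm⟩
  let compL : Composition n := ⟨lam, fun h => hposl _ h, hsuml⟩
  let compN : Composition n := ⟨nu, fun h => hposn _ h, hsumn⟩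
  have hcount (v : ℕ) : lam.count v = nu.count v := by
    rcases v.eq_zero_or_pos with rfl | hv
    · rw [List.count_eq_zero.2 fun h => (hposl 0 h).false,
        List.count_eq_zero.2 fun h => (hposn 0 h).false]
    · exact (compL.count_eq_heightCoverCount hn (compL.eq_lastOfBlock_index hflam) hv).trans <|
        (e.heightCoverCount_eq _ _).trans
          (compN.count_eq_heightCoverCount hn (compN.eq_lastOfBlock_index hfnu) hv).symm
  exact hne (List.Perm.eq_of_pairwise' hsortl hsortn (List.perm_iff_count.2 hcount))
end
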